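/- arXiv:1603.05086 — 6 statements merged into one kernel-verified Lean document; each statement's English description precedes it below -/
import Mathlib

section
/- Let p be an odd prime with p ≡ -3 (mod 8) (equivalently p ≡ 5 (mod 8)). Then the linear complexity over Z_4 of the quaternary sequence (s_u)_{u≥0} equals 2p. -/
open Polynomial

/-- The generalized cyclotomic class `D_i = {g^(2n+i) mod 2p : n = 0,...,(p-3)/2}` in `Z_{2p}`. -/
def Dcl (p g : ℕ) (i : ℕ) : Finset (ZMod (2 * p)) :=
  (Finset.range ((p - 1) / 2)).image (fun n => (g : ZMod (2 * p)) ^ (2 * n + i))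

/-- The generalized cyclotomic class `E_i = {2u mod 2p : u ∈ D_i}` in `Z_{2p}`. -/
def Ecl (p g : ℕ) (i : ℕ) : Finset (ZMod (2 * p)) :=
  (Dcl p g i).image (fun u => 2 * u)

/-- The quaternary sequence `(s_u)` over `Z_4` of period `2p`. -/
def seqS (p g : ℕ) (u : ℕ) : ZMod 4 :=
  if (u : ZMod (2 * p)) = 0 ∨ (u : ZMod (2 * p)) ∈ Dcl p g 0 then 0
  else if (u : ZMod (2 * p)) ∈ Dcl p g 1 then 1
  else if (u : ZMod (2 * p)) = (p : ZMod (2 * p)) ∨ (u : ZMod (2 * p)) ∈ Ecl p g 0 then 2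
  else 3

/-- The generating polynomial `S(X) = s_0 + s_1 X + ... + s_{2p-1} X^{2p-1} ∈ Z_4[X]`. -/
noncomputable def genPoly (p g : ℕ) : Polynomial (ZMod 4) :=
  ∑ u ∈ Finset.range (2 * p), Polynomial.C (seqS p g u) * Polynomial.X ^ u

/-- The linear complexity over `Z_4` of the sequence `(s_u)`:
`min{ deg C : C ∈ Z_4[X], C(0) = 1, S(X)C(X) ≡ 0 (mod X^{2p} - 1) }`. -/
noncomputable def linComplexity (p g : ℕ) : ℕ :=
  sInf { L | ∃ C : Polynomial (ZMod 4), C.eval 0 = 1 ∧ C.natDegree = L ∧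
      (Polynomial.X ^ (2 * p) - 1) ∣ genPoly p g * C }

/-!
Reduce a connection polynomial `Q` (with `Q(0) = 1` and `X^(2p) - 1 ∣ S Q`) modulo 2 to
`q ∈ 𝔽₂[X]`. Over `𝔽₂` we have `X^(2p) - 1 = (X² - 1) G²` with `G = 1 + X + ⋯ + X^(p-1)` coprime
to `X - 1`, so `deg Q ≥ 2p` as soon as `X² - 1 ∣ q` and `G² ∣ q`.

By the Chinese remainder theorem `s_u` depends only on `u mod 2` and on the quadratic character
of `u mod p`; since `p ≡ 5 (mod 8)`, `2` is a nonsquare mod `p`. Folding `S mod 2` modulo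
`X^p - 1` gives `G - 1`, so `S mod 2` is coprime to `G` and `G² ∣ q`. Folding `S` modulo `X² - 1`
over `ℤ₄` gives the constant `2` (this uses `(p - 1)/2 ≡ 2 (mod 4)`), so `X² - 1 ∣ 2Q`; as
`X² - 1` is monic, this forces `X² - 1 ∣ q`.
-/

open Finset

namespace Polynomial

variable {R : Type*} [CommRing R]

theorem X_pow_sub_one_dvd_X_pow_sub_X_pow_mod (m u : ℕ) :
    (X ^ m - 1 : R[X]) ∣ X ^ u - X ^ (u % m) := by
  have h := (sub_dvd_pow_sub_pow (X ^ m : R[X]) 1 (u / m)).mul_left (X ^ (u % m))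
  rwa [one_pow, mul_sub, mul_one, ← pow_mul, ← pow_add, Nat.mod_add_div] at h

theorem X_pow_sub_one_dvd_sum_sub_sum_mod (s : Finset ℕ) (f : ℕ → R) (m : ℕ) :
    (X ^ m - 1 : R[X]) ∣ ∑ u ∈ s, C (f u) * X ^ u - ∑ u ∈ s, C (f u) * X ^ (u % m) := by
  rw [← sum_sub_distrib]
  exact dvd_sum fun u _ => by
    rw [← mul_sub]; exact (X_pow_sub_one_dvd_X_pow_sub_X_pow_mod m u).mul_left _

theorem map_dvd_map_of_dvd_C_mul {S : Type*} [CommRing S] (φ : R →+* S) {a : R}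
    (ha : ∀ b, a * b = 0 → φ b = 0) {M P : R[X]} (hM : M.Monic) (h : M ∣ C a * P) :
    M.map φ ∣ P.map φ := by
  have hrem : a • (P %ₘ M) = 0 := by
    rw [← smul_modByMonic, smul_eq_C_mul, modByMonic_eq_zero_iff_dvd hM]
    exact h
  have hmap : (P %ₘ M).map φ = 0 := by
    ext k
    rw [coeff_map, coeff_zero]
    exact ha _ (by simpa using congrArg (coeff · k) hrem)
  rw [← modByMonic_eq_zero_iff_dvd (hM.map φ), ← map_modByMonic φ hM, hmap]

theorem isCoprime_X_sub_one_geom_sum {K : Type*} [Field K] {n : ℕ} (hn : (n : K) ≠ 0) :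
    IsCoprime (X - 1 : K[X]) (∑ i ∈ range n, X ^ i) := by
  rw [← C_1, (irreducible_X_sub_C 1).coprime_iff_not_dvd, dvd_iff_isRoot, IsRoot.def,
    eval_geom_sum]
  simpa using hn

theorem X_pow_two_mul_sub_one_eq_of_charTwo [CharP R 2] (n : ℕ) :
    (X ^ (2 * n) - 1 : R[X]) = (X ^ 2 - 1) * (∑ i ∈ range n, X ^ i) ^ 2 := by
  rw [pow_mul', ← one_pow 2, ← sub_pow_char, ← geom_sum_mul, mul_pow, ← sub_pow_char,
    mul_comm]

end Polynomial

theorem two_mul_le_natDegree_of_dvd_mul {n : ℕ} (hn : Odd n) {S Q : (ZMod 4)[X]}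
    (hS : (X ^ 2 - 1 : (ZMod 4)[X]) ∣ S - C 2)
    (hSn : IsCoprime (∑ i ∈ range n, X ^ i : (ZMod 2)[X])
      (S.map (ZMod.castHom (by norm_num : 2 ∣ 4) (ZMod 2))))
    (hQ : Q.eval 0 = 1) (h : X ^ (2 * n) - 1 ∣ S * Q) : 2 * n ≤ Q.natDegree := by
  set φ := ZMod.castHom (by norm_num : 2 ∣ 4) (ZMod 2)
  set G : (ZMod 2)[X] := ∑ i ∈ range n, X ^ i
  have hX2 : (X ^ 2 - 1 : (ZMod 4)[X]) ∣ C 2 * Q := by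
    have hdvd : (X ^ 2 - 1 : (ZMod 4)[X]) ∣ X ^ (2 * n) - 1 := by
      simpa [pow_mul] using sub_dvd_pow_sub_pow (X ^ 2 : (ZMod 4)[X]) 1 n
    have := dvd_sub (hdvd.trans h) (hS.mul_right Q)
    rwa [show S * Q - (S - C 2) * Q = C 2 * Q by ring] at this
  have hA : (X ^ 2 - 1 : (ZMod 2)[X]) ∣ Q.map φ := by
    simpa using map_dvd_map_of_dvd_C_mul φ (a := 2) (by decide) (monic_X_pow_sub_C 1 two_ne_zero)
      (by simpa using hX2)
  have hB : G ^ 2 ∣ Q.map φ := by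
    have hmap := Polynomial.map_dvd φ h
    rw [Polynomial.map_mul, Polynomial.map_sub, Polynomial.map_pow, map_X, Polynomial.map_one,
      X_pow_two_mul_sub_one_eq_of_charTwo] at hmap
    exact hSn.pow_left.dvd_of_dvd_mul_left ((dvd_mul_left _ _).trans hmap)
  have hcop : IsCoprime (X ^ 2 - 1 : (ZMod 2)[X]) (G ^ 2) := by
    rw [← one_pow 2, ← sub_pow_char]
    exact (isCoprime_X_sub_one_geom_sum (by
      rwa [Ne, ZMod.natCast_eq_zero_iff_even, Nat.not_even_iff_odd])).pow
  have hfull : (X ^ (2 * n) - 1 : (ZMod 2)[X]) ∣ Q.map φ := by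
    rw [X_pow_two_mul_sub_one_eq_of_charTwo]
    exact hcop.mul_dvd hA hB
  have hne : Q.map φ ≠ 0 := fun h0 => by simpa [hQ] using congrArg (eval 0) h0
  calc 2 * n = (X ^ (2 * n) - C 1 : (ZMod 2)[X]).natDegree := (natDegree_X_pow_sub_C ..).symm
    _ ≤ (Q.map φ).natDegree := natDegree_le_of_dvd (by simpa using hfull) hne
    _ ≤ Q.natDegree := natDegree_map_le

theorem linComplexity_eq_of_forall_le {p g : ℕ} (hp : p ≠ 0)
    (h : ∀ Q : (ZMod 4)[X], Q.eval 0 = 1 → X ^ (2 * p) - 1 ∣ genPoly p g * Q →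
      2 * p ≤ Q.natDegree) :
    linComplexity p g = 2 * p := by
  have : Fact (1 < 4) := ⟨by norm_num⟩
  have hmem : 2 * p ∈ {L | ∃ Q : (ZMod 4)[X], Q.eval 0 = 1 ∧ Q.natDegree = L ∧
      X ^ (2 * p) - 1 ∣ genPoly p g * Q} := by
    refine ⟨1 - X ^ (2 * p), by simp [hp], ?_, ⟨-genPoly p g, by ring⟩⟩
    rw [← neg_sub, natDegree_neg, ← C_1, natDegree_X_pow_sub_C]
  refine le_antisymm (Nat.sInf_le hmem) (le_csInf ⟨_, hmem⟩ ?_)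
  rintro L ⟨Q, hQ, rfl, hdvd⟩
  exact h Q hQ hdvd

namespace ZMod

theorem sum_range_natCast {M : Type*} [AddCommMonoid M] (n : ℕ) [NeZero n] (f : ZMod n → M) :
    ∑ i ∈ range n, f i = ∑ x : ZMod n, f x :=
  sum_nbij' (↑) val (fun _ _ => mem_univ _) (fun x _ => mem_range.2 x.val_lt)
    (fun _ hi => val_cast_of_lt (mem_range.1 hi)) (fun x _ => natCast_zmod_val x) (fun _ _ => rfl)

theorem sum_range_mul_natCast_natCast {M : Type*} [AddCommMonoid M] {m n : ℕ} [NeZero m]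
    [NeZero n] (hmn : m.Coprime n) (F : ZMod m → ZMod n → M) :
    ∑ u ∈ range (m * n), F u u = ∑ a : ZMod m, ∑ b : ZMod n, F a b := by
  rw [← Fintype.sum_prod_type', ← (chineseRemainder hmn).toEquiv.sum_comp]
  refine (sum_congr rfl fun u _ => ?_).trans
    (sum_range_natCast (m * n) fun x => F (chineseRemainder hmn x).1 (chineseRemainder hmn x).2)
  simp [map_natCast]

theorem natCast_eq_natCast_iff_of_coprime {m n : ℕ} (hmn : m.Coprime n) (a b : ℕ) :
    (a : ZMod (m * n)) = b ↔ (a : ZMod m) = b ∧ (a : ZMod n) = b := by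
  simp only [natCast_eq_natCast_iff, Nat.modEq_and_modEq_iff_modEq_mul hmn]

end ZMod

theorem FiniteField.card_sub_one_ne_zero (F : Type*) [Field F] [Fintype F] :
    Fintype.card F - 1 ≠ 0 :=
  Nat.sub_ne_zero_of_lt Fintype.one_lt_card

namespace IsPrimitiveRoot

variable {F : Type*} [Field F] [Fintype F] {γ : F}
  (hγ : IsPrimitiveRoot γ (Fintype.card F - 1)) (hF : Odd (Fintype.card F))
include hγ

theorem exists_pow_eq_of_ne_zero {y : F} (hy : y ≠ 0) : ∃ k < Fintype.card F - 1, γ ^ k = y :=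
  have : NeZero (Fintype.card F - 1) := ⟨FiniteField.card_sub_one_ne_zero F⟩
  hγ.eq_pow_of_pow_eq_one (FiniteField.pow_card_sub_one_eq_one y hy)

include hF

theorem isSquare_pow_iff (k : ℕ) : IsSquare (γ ^ k) ↔ Even k := by
  refine ⟨fun ⟨z, hz⟩ => ?_, fun hk => hk.isSquare_pow γ⟩
  have hq := FiniteField.card_sub_one_ne_zero F
  obtain ⟨j, -, rfl⟩ := hγ.exists_pow_eq_of_ne_zero (y := z) fun hz0 => by
    simp [hz0, (hγ.isUnit hq).ne_zero] at hz
  rw [← pow_add, (hγ.isOfFinOrder hq).pow_eq_pow_iff_modEq, ← hγ.eq_orderOf] at hz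
  have := Nat.ModEq.of_dvd (even_iff_two_dvd.1 (Nat.Odd.sub_odd hF odd_one)) hz
  rw [Nat.even_iff]
  unfold Nat.ModEq at this
  omega

theorem isSquare_mul_iff {a b : F} (ha : a ≠ 0) (hb : b ≠ 0) :
    IsSquare (a * b) ↔ (IsSquare a ↔ IsSquare b) := by
  obtain ⟨k, -, rfl⟩ := hγ.exists_pow_eq_of_ne_zero ha
  obtain ⟨l, -, rfl⟩ := hγ.exists_pow_eq_of_ne_zero hb
  simp only [← pow_add, hγ.isSquare_pow_iff hF, Nat.even_add]

theorem mem_image_pow_two_mul_add_iff [DecidableEq F] {i : ℕ} (hi : i < 2) {y : F} :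
    y ∈ (range ((Fintype.card F - 1) / 2)).image (fun n => γ ^ (2 * n + i)) ↔
      y ≠ 0 ∧ (IsSquare y ↔ Even i) := by
  have hq := FiniteField.card_sub_one_ne_zero F
  have hF' := Nat.Odd.sub_odd hF odd_one
  constructor
  · rintro h
    obtain ⟨n, -, rfl⟩ := mem_image.1 h
    refine ⟨pow_ne_zero _ (hγ.isUnit hq).ne_zero, ?_⟩
    simp [hγ.isSquare_pow_iff hF, Nat.even_add, parity_simps]
  · rintro ⟨hy, hsq⟩
    obtain ⟨k, hk, rfl⟩ := hγ.exists_pow_eq_of_ne_zero hy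
    rw [hγ.isSquare_pow_iff hF, Nat.even_iff, Nat.even_iff] at hsq
    refine mem_image.2 ⟨k / 2, mem_range.2 ?_, ?_⟩
    · rw [Nat.even_iff] at hF'; omega
    · congr 1; omega

theorem card_filter_isSquare_iff [DecidableEq F] {i : ℕ} (hi : i < 2) :
    #{y : F | y ≠ 0 ∧ (IsSquare y ↔ Even i)} = (Fintype.card F - 1) / 2 := by
  have hF' := Nat.Odd.sub_odd hF odd_one
  rw [Nat.even_iff] at hF'
  have himage : ({y : F | y ≠ 0 ∧ (IsSquare y ↔ Even i)} : Finset F) =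
      (range ((Fintype.card F - 1) / 2)).image (fun n => γ ^ (2 * n + i)) := by
    ext y; simp only [mem_filter, mem_univ, true_and, hγ.mem_image_pow_two_mul_add_iff hF hi]
  rw [himage, card_image_of_injOn, card_range]
  intro a ha b hb hab
  simp only [coe_range, Set.mem_Iio] at ha hb
  have := hγ.pow_inj (by omega) (by omega) hab
  omega

theorem sum_ite_eq_zero_ite_isSquare [DecidableEq F] {M : Type*} [AddCommMonoid M] (c₀ c₁ c₂ : M) :
    ∑ y : F, (if y = 0 then c₀ else if IsSquare y then c₁ else c₂) =
      c₀ + ((Fintype.card F - 1) / 2) • c₁ + ((Fintype.card F - 1) / 2) • c₂ := by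
  have hsq := card_filter_isSquare_iff hγ hF (i := 0) (by norm_num)
  have hnsq := card_filter_isSquare_iff hγ hF (i := 1) (by norm_num)
  simp only [Even.zero, iff_true, Nat.not_even_one, iff_false, ne_eq] at hsq hnsq
  rw [sum_ite, filter_eq', if_pos (mem_univ 0), sum_singleton, sum_ite, filter_filter,
    filter_filter, sum_const, sum_const, hsq, hnsq, add_assoc]

end IsPrimitiveRoot

section CyclotomicClasses

variable {p g : ℕ}

theorem natCast_mem_Dcl_iff_mem_image (hp : Odd p) (hg : Odd g) (u i : ℕ) :
    (u : ZMod (2 * p)) ∈ Dcl p g i ↔ (u : ZMod 2) = 1 ∧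
      (u : ZMod p) ∈ (range ((p - 1) / 2)).image (fun n => (g : ZMod p) ^ (2 * n + i)) := by
  have hpow (k : ℕ) : (g : ZMod (2 * p)) ^ k = u ↔ (u : ZMod 2) = 1 ∧ (g : ZMod p) ^ k = u := by
    rw [← Nat.cast_pow, ZMod.natCast_eq_natCast_iff_of_coprime (Nat.coprime_two_left.2 hp),
      Nat.cast_pow, Nat.cast_pow, ZMod.natCast_eq_one_iff_odd.2 hg, one_pow, eq_comm (a := 1)]
  simp only [Dcl, mem_image, hpow]
  tauto

theorem natCast_mem_Ecl_iff_mem_image (hp : Odd p) (u i : ℕ) :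
    (u : ZMod (2 * p)) ∈ Ecl p g i ↔ (u : ZMod 2) = 0 ∧
      (u : ZMod p) ∈ (range ((p - 1) / 2)).image (fun n => 2 * (g : ZMod p) ^ (2 * n + i)) := by
  have hpow (k : ℕ) :
      2 * (g : ZMod (2 * p)) ^ k = u ↔ (u : ZMod 2) = 0 ∧ 2 * (g : ZMod p) ^ k = u := by
    have hcast : 2 * (g : ZMod (2 * p)) ^ k = ((2 * g ^ k : ℕ) : ZMod (2 * p)) := by push_cast; rfl
    rw [hcast, ZMod.natCast_eq_natCast_iff_of_coprime (Nat.coprime_two_left.2 hp)]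
    push_cast
    rw [show (2 : ZMod 2) = 0 from rfl, zero_mul, eq_comm (a := 0)]
  simp only [Ecl, Dcl, image_image, Function.comp_def, mem_image, hpow]
  tauto

theorem natCast_mem_Dcl_iff [Fact p.Prime] (hp : Odd p) (hg : Odd g)
    (hγ : IsPrimitiveRoot (g : ZMod p) (p - 1)) {i : ℕ} (hi : i < 2) (u : ℕ) :
    (u : ZMod (2 * p)) ∈ Dcl p g i ↔
      (u : ZMod 2) = 1 ∧ (u : ZMod p) ≠ 0 ∧ (IsSquare (u : ZMod p) ↔ Even i) := by
  have hγ' : IsPrimitiveRoot (g : ZMod p) (Fintype.card (ZMod p) - 1) := by rwa [ZMod.card]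
  have := hγ'.mem_image_pow_two_mul_add_iff (by rwa [ZMod.card]) hi (y := (u : ZMod p))
  rw [ZMod.card] at this
  rw [natCast_mem_Dcl_iff_mem_image hp hg, this]

theorem natCast_mem_Ecl_iff [Fact p.Prime] (hp : Odd p) (h2 : ¬IsSquare (2 : ZMod p))
    (hγ : IsPrimitiveRoot (g : ZMod p) (p - 1)) {i : ℕ} (hi : i < 2) (u : ℕ) :
    (u : ZMod (2 * p)) ∈ Ecl p g i ↔
      (u : ZMod 2) = 0 ∧ (u : ZMod p) ≠ 0 ∧ (IsSquare (u : ZMod p) ↔ ¬Even i) := by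
  have h20 : (2 : ZMod p) ≠ 0 := fun h => h2 (h ▸ IsSquare.zero)
  have hγ' : IsPrimitiveRoot (g : ZMod p) (Fintype.card (ZMod p) - 1) := by rwa [ZMod.card]
  have hp' : Odd (Fintype.card (ZMod p)) := by rwa [ZMod.card]
  have hmem := hγ'.mem_image_pow_two_mul_add_iff hp' hi (y := 2⁻¹ * (u : ZMod p))
  rw [ZMod.card] at hmem
  have himage :
      (u : ZMod p) ∈ (range ((p - 1) / 2)).image (fun n => 2 * (g : ZMod p) ^ (2 * n + i)) ↔
        2⁻¹ * (u : ZMod p) ∈ (range ((p - 1) / 2)).image (fun n => (g : ZMod p) ^ (2 * n + i)) := by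
    simp only [mem_image, eq_inv_mul_iff_mul_eq₀ h20]
  rw [natCast_mem_Ecl_iff_mem_image hp, himage, hmem]
  by_cases hu : (u : ZMod p) = 0
  · simp [hu]
  · rw [hγ'.isSquare_mul_iff hp' (inv_ne_zero h20) hu, isSquare_inv]
    simp only [h2, false_iff, ne_eq, mul_eq_zero, inv_eq_zero, h20, hu, or_self, not_false_eq_true,
      true_and]
    tauto

-- `s_u` as a function of `(u mod 2, u mod p)`: `u` is odd on `{p} ∪ D₀ ∪ D₁` and even on
-- `{0} ∪ E₀ ∪ E₁`; modulo `p`, `D₀` and `D₁` are the squares and nonsquares, and (`2` being a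
-- nonsquare) `E₀` and `E₁` the nonsquares and squares.
def classValue [NeZero p] (a : ZMod 2) (y : ZMod p) : ZMod 4 :=
  if y = 0 then (if a = 0 then 0 else 2)
  else if IsSquare y then (if a = 0 then 3 else 0)
  else if a = 0 then 2 else 1

theorem seqS_eq_classValue [Fact p.Prime] (hp : Odd p) (h2 : ¬IsSquare (2 : ZMod p)) (hg : Odd g)
    (hγ : IsPrimitiveRoot (g : ZMod p) (p - 1)) (u : ℕ) :
    seqS p g u = classValue (u : ZMod 2) (u : ZMod p) := by
  have hcrt := ZMod.natCast_eq_natCast_iff_of_coprime (Nat.coprime_two_left.2 hp) u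
  have h0 := hcrt 0
  have hpp := hcrt p
  simp only [Nat.cast_zero, ZMod.natCast_self, ZMod.natCast_eq_one_iff_odd.2 hp] at h0 hpp
  simp only [seqS, h0, hpp, natCast_mem_Dcl_iff hp hg hγ (i := 0) (by norm_num),
    natCast_mem_Dcl_iff hp hg hγ (i := 1) (by norm_num),
    natCast_mem_Ecl_iff hp h2 hγ (i := 0) (by norm_num), classValue]
  obtain ha | ha : (u : ZMod 2) = 0 ∨ (u : ZMod 2) = 1 := by
    generalize (u : ZMod 2) = a; revert a; decide
  all_goals
    by_cases hy : (u : ZMod p) = 0 <;> by_cases hs : IsSquare (u : ZMod p) <;> simp [ha, hy, hs]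

theorem sum_classValue [Fact p.Prime] (hp8 : p % 8 = 5) (hγ : IsPrimitiveRoot (g : ZMod p) (p - 1))
    (a : ZMod 2) : ∑ y : ZMod p, classValue a y = if a = 0 then 2 else 0 := by
  have hγ' : IsPrimitiveRoot (g : ZMod p) (Fintype.card (ZMod p) - 1) := by rwa [ZMod.card]
  have hcard : (((p - 1) / 2 : ℕ) : ZMod 4) = 2 := by
    rw [← ZMod.natCast_mod, show (p - 1) / 2 % 4 = 2 by omega, Nat.cast_ofNat]
  simp only [classValue]
  rw [hγ'.sum_ite_eq_zero_ite_isSquare (by rw [ZMod.card, Nat.odd_iff]; omega), ZMod.card,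
    nsmul_eq_mul, nsmul_eq_mul, hcard]
  revert a; decide

theorem sum_castHom_classValue [NeZero p] (y : ZMod p) :
    ∑ a : ZMod 2, ZMod.castHom (by norm_num : 2 ∣ 4) (ZMod 2) (classValue a y) =
      if y = 0 then 0 else 1 := by
  simp only [classValue]
  split_ifs <;> decide

theorem X_sq_sub_one_dvd_genPoly_sub_two [Fact p.Prime] (hp8 : p % 8 = 5)
    (h2 : ¬IsSquare (2 : ZMod p)) (hg : Odd g) (hγ : IsPrimitiveRoot (g : ZMod p) (p - 1)) :
    (X ^ 2 - 1 : (ZMod 4)[X]) ∣ genPoly p g - C 2 := by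
  have hp : Odd p := Nat.odd_iff.2 (by omega)
  have hred : ∑ u ∈ range (2 * p), C (seqS p g u) * X ^ (u % 2) = C 2 :=
    calc ∑ u ∈ range (2 * p), C (seqS p g u) * X ^ (u % 2)
        = ∑ u ∈ range (2 * p), C (classValue (u : ZMod 2) (u : ZMod p)) * X ^ (u : ZMod 2).val := by
          simp only [seqS_eq_classValue hp h2 hg hγ, ZMod.val_natCast]
      _ = ∑ a : ZMod 2, ∑ y : ZMod p, C (classValue a y) * X ^ a.val :=
          ZMod.sum_range_mul_natCast_natCast (Nat.coprime_two_left.2 hp)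
            fun a y => C (classValue a y) * X ^ a.val
      _ = ∑ a : ZMod 2, C (if a = 0 then 2 else 0) * X ^ a.val := by
          simp only [← sum_mul, ← map_sum, sum_classValue hp8 hγ]
      _ = C 2 := by
          rw [Fintype.sum_eq_single 0 fun a ha => by simp [ha]]
          simp
  rw [genPoly, ← hred]
  exact X_pow_sub_one_dvd_sum_sub_sum_mod _ _ _

theorem X_pow_sub_one_dvd_map_genPoly_sub [Fact p.Prime] (hp : Odd p)
    (h2 : ¬IsSquare (2 : ZMod p)) (hg : Odd g) (hγ : IsPrimitiveRoot (g : ZMod p) (p - 1)) :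
    (X ^ p - 1 : (ZMod 2)[X]) ∣
      (genPoly p g).map (ZMod.castHom (by norm_num : 2 ∣ 4) (ZMod 2)) -
        (∑ i ∈ range p, X ^ i - 1) := by
  set φ := ZMod.castHom (by norm_num : 2 ∣ 4) (ZMod 2)
  have hred : ∑ u ∈ range (2 * p), C (φ (seqS p g u)) * X ^ (u % p) = ∑ i ∈ range p, X ^ i - 1 :=
    calc ∑ u ∈ range (2 * p), C (φ (seqS p g u)) * X ^ (u % p)
        = ∑ u ∈ range (2 * p), C (φ (classValue (u : ZMod 2) (u : ZMod p))) *
            X ^ (u : ZMod p).val := by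
          simp only [seqS_eq_classValue hp h2 hg hγ, ZMod.val_natCast]
      _ = ∑ y : ZMod p, ∑ a : ZMod 2, C (φ (classValue a y)) * X ^ y.val := by
          rw [ZMod.sum_range_mul_natCast_natCast (Nat.coprime_two_left.2 hp)
            fun a y => C (φ (classValue a y)) * X ^ y.val, sum_comm]
      _ = ∑ y : ZMod p, (X ^ y.val - if y = 0 then 1 else 0) := by
          refine sum_congr rfl fun y _ => ?_
          rw [← sum_mul, ← map_sum, sum_castHom_classValue]
          split_ifs with hy <;> simp [hy]
      _ = ∑ i ∈ range p, X ^ i - 1 := by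
          rw [sum_sub_distrib, sum_ite_eq', if_pos (mem_univ _),
            ← ZMod.sum_range_natCast p fun y => (X : (ZMod 2)[X]) ^ y.val]
          congr 1
          exact sum_congr rfl fun i hi => by rw [ZMod.val_cast_of_lt (mem_range.1 hi)]
  have hmap : (genPoly p g).map φ = ∑ u ∈ range (2 * p), C (φ (seqS p g u)) * X ^ u := by
    simp [genPoly, Polynomial.map_sum]
  rw [hmap, ← hred]
  exact X_pow_sub_one_dvd_sum_sub_sum_mod _ _ _

theorem isCoprime_geom_sum_map_genPoly [Fact p.Prime] (hp : Odd p)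
    (h2 : ¬IsSquare (2 : ZMod p)) (hg : Odd g) (hγ : IsPrimitiveRoot (g : ZMod p) (p - 1)) :
    IsCoprime (∑ i ∈ range p, X ^ i : (ZMod 2)[X])
      ((genPoly p g).map (ZMod.castHom (by norm_num : 2 ∣ 4) (ZMod 2))) := by
  obtain ⟨k, hk⟩ := (Dvd.intro _ (geom_sum_mul X p)).trans
    (X_pow_sub_one_dvd_map_genPoly_sub hp h2 hg hγ)
  exact ⟨1 + k, -1, by linear_combination -hk⟩

end CyclotomicClasses

theorem stmt0_general (p g : ℕ) (hp : p.Prime) (hp8 : p % 8 = 5)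
    (hgodd : Odd g)
    (hg1 : orderOf (g : ZMod p) = p - 1) :
    linComplexity p g = 2 * p := by
  have := Fact.mk hp
  have hpodd : Odd p := Nat.odd_iff.2 (by omega)
  have h2 : ¬IsSquare (2 : ZMod p) := by rw [ZMod.exists_sq_eq_two_iff (by omega)]; omega
  have hγ := IsPrimitiveRoot.iff_orderOf.2 hg1
  refine linComplexity_eq_of_forall_le hp.ne_zero fun Q hQ hdvd => ?_
  exact two_mul_le_natDegree_of_dvd_mul hpodd (X_sq_sub_one_dvd_genPoly_sub_two hp8 h2 hgodd hγ)
    (isCoprime_geom_sum_map_genPoly hpodd h2 hgodd hγ) hQ hdvd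

theorem stmt0 (p g : ℕ) (hp : p.Prime) (hpodd : Odd p) (hp8 : p % 8 = 5)
    (hgodd : Odd g)
    (hg1 : orderOf (g : ZMod p) = p - 1)
    (hg2 : orderOf (g : ZMod (2 * p)) = p - 1) :
    linComplexity p g = 2 * p :=
  stmt0_general p g hp hp8 hgodd hg1
end

section
/- For any i, j ∈ {0,1} and any v ∈ E_i, one has v·D_j = E_{(i+j) mod 2}; moreover, v·E_j = E_{(i+j) mod 2} if p ≡ ±1 (mod 8), and v·E_j = E_{(i+j+1) mod 2} if p ≡ ±3 (mod 8). Here v·A denotes {v·u mod 2p : u ∈ A} for a subset A of Z_{2p}. -/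
open Polynomial

lemma image_periodic {α : Type*} [DecidableEq α] (f : ℕ → α) (h : ℕ) (hh : 0 < h)
    (hper : ∀ n, f (n + h) = f n) (a : ℕ) :
    (Finset.range h).image (fun n => f (n + a)) = (Finset.range h).image f := by
  have hmul : ∀ n k, f (n + h * k) = f n := by
    intro n k
    induction k with
    | zero => simp
    | succ k ih => rw [Nat.mul_succ, ← Nat.add_assoc, hper, ih]
  have hmodadd : ∀ m k, f (m % h + k) = f (m + k) := by
    intro m k
    conv_rhs => rw [← Nat.mod_add_div m h]
    rw [show m % h + h * (m / h) + k = m % h + k + h * (m / h) by omega, hmul]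
  have hmod : ∀ m, f (m % h) = f m := fun m => by simpa using hmodadd m 0
  ext x
  simp only [Finset.mem_image, Finset.mem_range]
  constructor
  · rintro ⟨n, hn, rfl⟩
    exact ⟨(n + a) % h, Nat.mod_lt _ hh, hmod _⟩
  · rintro ⟨n, hn, rfl⟩
    refine ⟨(n + (h - a % h)) % h, Nat.mod_lt _ hh, ?_⟩
    obtain ⟨k, hk⟩ : ∃ k, n + (h - a % h) + a = n + h * k := by
      refine ⟨1 + a / h, ?_⟩
      have h2 := Nat.mod_add_div a h
      have h3 := Nat.mod_lt a hh
      rw [Nat.mul_add, Nat.mul_one]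
      generalize a % h = r at h2 h3 ⊢
      generalize h * (a / h) = t at h2 ⊢
      omega
    rw [hmodadd, hk, hmul]

lemma two_mul_eq_of_cast_eq {p : ℕ} [NeZero p] {x y : ZMod (2 * p)}
    (h : ZMod.castHom (dvd_mul_left p 2) (ZMod p) x =
         ZMod.castHom (dvd_mul_left p 2) (ZMod p) y) :
    (2 : ZMod (2 * p)) * x = 2 * y := by
  haveI : NeZero (2 * p) := ⟨by have := NeZero.ne p; positivity⟩
  have hd : ZMod.castHom (dvd_mul_left p 2) (ZMod p) (x - y) = 0 := by
    rw [map_sub, h, sub_self]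
  rw [ZMod.castHom_apply, ← ZMod.natCast_val, ZMod.natCast_eq_zero_iff] at hd
  obtain ⟨k, hk⟩ := hd
  have hxy : x - y = ((x - y).val : ZMod (2 * p)) := (ZMod.natCast_zmod_val _).symm
  have hz : 2 * (x - y) = 0 := by
    rw [hxy, hk]
    push_cast
    rw [show (2 : ZMod (2 * p)) * ((p : ZMod (2 * p)) * (k : ZMod (2*p)))
        = ((2 * p : ℕ) : ZMod (2 * p)) * k by push_cast; ring, ZMod.natCast_self, zero_mul]
  linear_combination hz

lemma exists_pow_eq {p : ℕ} (hp : p.Prime) {g : ℕ}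
    (hg1 : orderOf (g : ZMod p) = p - 1) (x : ZMod p) (hx : x ≠ 0) :
    ∃ s, (g : ZMod p) ^ s = x := by
  haveI : Fact p.Prime := ⟨hp⟩
  have hg0 : (g : ZMod p) ≠ 0 := by
    intro h0
    have h1 := pow_orderOf_eq_one (g : ZMod p)
    have hne : p - 1 ≠ 0 := by have := hp.two_le; omega
    rw [hg1, h0, zero_pow hne] at h1
    exact zero_ne_one h1
  classical
  set S : Finset (ZMod p) := (Finset.range (p - 1)).image (fun s => (g : ZMod p) ^ s) with hS
  have hcard : S.card = p - 1 := by
    rw [hS, Finset.card_image_of_injOn, Finset.card_range]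
    intro a ha b hb hab
    refine pow_injOn_Iio_orderOf ?_ ?_ hab
    · simpa [Finset.coe_range, hg1] using ha
    · simpa [Finset.coe_range, hg1] using hb
  have hsub : S ⊆ Finset.univ.erase 0 := by
    intro z hz
    simp only [hS, Finset.mem_image, Finset.mem_range] at hz
    obtain ⟨s, _, rfl⟩ := hz
    exact Finset.mem_erase.2 ⟨pow_ne_zero _ hg0, Finset.mem_univ _⟩
  have hcard2 : (Finset.univ.erase (0 : ZMod p)).card = p - 1 := by
    rw [Finset.card_erase_of_mem (Finset.mem_univ _), Finset.card_univ, ZMod.card]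
  have hEq : S = Finset.univ.erase 0 :=
    Finset.eq_of_subset_of_card_le hsub (by rw [hcard, hcard2])
  have hx' : x ∈ S := hEq ▸ Finset.mem_erase.2 ⟨hx, Finset.mem_univ _⟩
  simp only [hS, Finset.mem_image, Finset.mem_range] at hx'
  obtain ⟨s, _, h⟩ := hx'
  exact ⟨s, h⟩

lemma exists_two_eq_pow {p g : ℕ} (hp : p.Prime) (hpodd : Odd p)
    (hg1 : orderOf (g : ZMod p) = p - 1) :
    ∃ s, (g : ZMod p) ^ s = 2 ∧ (s % 2 = 0 ↔ (p % 8 = 1 ∨ p % 8 = 7)) := by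
  haveI : Fact p.Prime := ⟨hp⟩
  have hp2 : p ≠ 2 := by rintro rfl; simp [Nat.odd_iff] at hpodd
  have hp3 : 3 ≤ p := by have := hp.two_le; omega
  have h20 : (2 : ZMod p) ≠ 0 := by
    intro h0
    rw [show (2 : ZMod p) = ((2 : ℕ) : ZMod p) by push_cast; ring,
      ZMod.natCast_eq_zero_iff] at h0
    have := Nat.le_of_dvd (by norm_num) h0
    omega
  obtain ⟨s, hs⟩ := exists_pow_eq hp hg1 2 h20
  refine ⟨s, hs, ?_⟩
  have hsq : IsSquare (2 : ZMod p) ↔ (p % 8 = 1 ∨ p % 8 = 7) :=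
    ZMod.exists_sq_eq_two_iff hp2
  rw [← hsq]
  constructor
  · intro he
    refine ⟨(g : ZMod p) ^ (s / 2), ?_⟩
    rw [← hs, ← pow_add]
    congr 1
    omega
  · rintro ⟨b, hb⟩
    have hb0 : b ≠ 0 := by
      rintro rfl
      rw [mul_zero] at hb
      exact h20 hb
    obtain ⟨t, ht⟩ := exists_pow_eq hp hg1 b hb0
    have hst : (g : ZMod p) ^ s = (g : ZMod p) ^ (2 * t) := by
      rw [hs, hb, ← ht, ← pow_add, two_mul]
    have hp1 : 0 < p - 1 := by omega
    have hmm : s % (p - 1) = (2 * t) % (p - 1) := by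
      refine pow_injOn_Iio_orderOf (x := (g : ZMod p)) ?_ ?_ ?_
      · rw [hg1]; exact Nat.mod_lt _ hp1
      · rw [hg1]; exact Nat.mod_lt _ hp1
      · show (g : ZMod p) ^ (s % (p - 1)) = (g : ZMod p) ^ ((2 * t) % (p - 1))
        conv_lhs => rw [← hg1, pow_mod_orderOf]
        conv_rhs => rw [← hg1, pow_mod_orderOf]
        exact hst
    have h2d : (2 : ℕ) ∣ p - 1 := by
      obtain ⟨m, hm⟩ := hpodd; omega
    have h2 : s % 2 = (2 * t) % 2 := by
      rw [← Nat.mod_mod_of_dvd s h2d, ← Nat.mod_mod_of_dvd (2 * t) h2d, hmm]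
    rw [Nat.mul_mod_right] at h2
    exact h2

theorem stmt7 (p g : ℕ) (hp : p.Prime) (hpodd : Odd p)
    (hgodd : Odd g)
    (hg1 : orderOf (g : ZMod p) = p - 1)
    (hg2 : orderOf (g : ZMod (2 * p)) = p - 1)
    (i j : ℕ) (hi : i < 2) (hj : j < 2)
    (v : ZMod (2 * p)) (hv : v ∈ Ecl p g i) :
    (Dcl p g j).image (fun u => v * u) = Ecl p g ((i + j) % 2) ∧
    ((p % 8 = 1 ∨ p % 8 = 7) →
      (Ecl p g j).image (fun u => v * u) = Ecl p g ((i + j) % 2)) ∧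
    ((p % 8 = 3 ∨ p % 8 = 5) →
      (Ecl p g j).image (fun u => v * u) = Ecl p g ((i + j + 1) % 2)) := by
  haveI : Fact p.Prime := ⟨hp⟩
  haveI : NeZero p := ⟨hp.pos.ne'⟩
  have hp3 : 3 ≤ p := by
    have := hp.two_le
    rcases Nat.lt_or_ge p 3 with h | h
    · interval_cases p
      · exact absurd hpodd (by norm_num)
    · exact h
  have h2H : 2 * ((p - 1) / 2) = p - 1 := by
    obtain ⟨m, hm⟩ := hpodd; omega
  have hH0 : 0 < (p - 1) / 2 := by omega
  have hGper : (g : ZMod (2 * p)) ^ (p - 1) = 1 := by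
    rw [← hg2]; exact pow_orderOf_eq_one _
  -- key lemma: the image of m ↦ 2 * g^(2m+e) over range ((p-1)/2) is Ecl p g (e % 2)
  have key : ∀ e : ℕ,
      (Finset.range ((p - 1) / 2)).image (fun m => 2 * (g : ZMod (2 * p)) ^ (2 * m + e))
      = Ecl p g (e % 2) := by
    intro e
    have hEcl : Ecl p g (e % 2) = (Finset.range ((p - 1) / 2)).image
        (fun n => 2 * (g : ZMod (2 * p)) ^ (2 * n + e % 2)) := by
      rw [Ecl, Dcl, Finset.image_image]
      rfl
    have hfun : (fun m => 2 * (g : ZMod (2 * p)) ^ (2 * m + e))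
        = (fun m => 2 * (g : ZMod (2 * p)) ^ (2 * (m + e / 2) + e % 2)) := by
      funext m
      congr 2
      omega
    rw [hEcl, hfun]
    exact image_periodic (fun n => 2 * (g : ZMod (2 * p)) ^ (2 * n + e % 2)) _ hH0
      (fun n => by
        show 2 * (g : ZMod (2 * p)) ^ (2 * (n + (p - 1) / 2) + e % 2)
            = 2 * (g : ZMod (2 * p)) ^ (2 * n + e % 2)
        rw [show 2 * (n + (p - 1) / 2) + e % 2 = (2 * n + e % 2) + (p - 1) by omega,
          pow_add, hGper, mul_one]) (e / 2)
  -- decompose v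
  simp only [Ecl, Dcl, Finset.mem_image, Finset.mem_range] at hv
  obtain ⟨u, ⟨n₀, hn₀, rfl⟩, rfl⟩ := hv
  obtain ⟨s, hs, hspar⟩ := exists_two_eq_pow hp hpodd hg1
  have hcast : ∀ E : ℕ, (2 : ZMod (2 * p)) * (2 * (g : ZMod (2 * p)) ^ E)
      = 2 * (g : ZMod (2 * p)) ^ (s + E) := by
    intro E
    apply two_mul_eq_of_cast_eq
    rw [map_mul, map_pow, map_pow, map_natCast, map_ofNat, pow_add, ← hs]
  have hEimg : (Ecl p g j).image (fun u => 2 * (g : ZMod (2 * p)) ^ (2 * n₀ + i) * u)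
      = Ecl p g ((s + 2 * n₀ + i + j) % 2) := by
    rw [Ecl, Dcl, Finset.image_image, Finset.image_image, ← key (s + 2 * n₀ + i + j)]
    refine Finset.image_congr fun m _ => ?_
    simp only [Function.comp_apply]
    have h1 : 2 * (g : ZMod (2 * p)) ^ (2 * n₀ + i) * (2 * (g : ZMod (2 * p)) ^ (2 * m + j))
        = 2 * (2 * (g : ZMod (2 * p)) ^ ((2 * n₀ + i) + (2 * m + j))) := by
      conv_rhs => rw [pow_add]
      ring
    rw [h1, hcast,
      show s + ((2 * n₀ + i) + (2 * m + j)) = 2 * m + (s + 2 * n₀ + i + j) by omega]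
  refine ⟨?_, ?_, ?_⟩
  · -- v * D_j
    rw [Dcl, Finset.image_image,
      show (i + j) % 2 = (2 * n₀ + i + j) % 2 by omega, ← key (2 * n₀ + i + j)]
    refine Finset.image_congr fun m _ => ?_
    simp only [Function.comp_apply]
    conv_rhs => rw [show 2 * m + (2 * n₀ + i + j) = (2 * n₀ + i) + (2 * m + j) by omega,
      pow_add]
    ring
  · intro hcase
    have hs0 : s % 2 = 0 := hspar.mpr hcase
    rw [hEimg]
    congr 1
    omega
  · intro hcase
    have hs1 : s % 2 = 1 := by
      rcases Nat.mod_two_eq_zero_or_one s with h0 | h1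
      · exfalso
        have := hspar.mp h0
        omega
      · exact h1
    rw [hEimg]
    congr 1
    omega
end

section
/- For each i ∈ {0,1}: if p ≡ ±1 (mod 8) then D_i = {(v + p) mod 2p : v ∈ E_i}, and if p ≡ ±3 (mod 8) then D_{(i+1) mod 2} = {(v + p) mod 2p : v ∈ E_i}. Consequently (exchanging the roles of D and E): if p ≡ ±1 (mod 8) then E_i = {(v + p) mod 2p : v ∈ D_i}, and if p ≡ ±3 (mod 8) then E_{(i+1) mod 2} = {(v + p) mod 2p : v ∈ D_i}. -/
/-! Since `g` is odd, `p * g ^ m = p` in `ZMod (2 * p)`, so `2 * g ^ m + p = (2 + p) * g ^ m`.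
The unit `2 + p` is a power `g ^ k` of the generator, hence translation by `p` maps `E_a` onto
`D_(a+k)`, and, being an involution, `D_a` onto `E_(a+k)`. Reducing `g ^ k = 2 + p` modulo `p`
gives `g ^ k = 2` in `ZMod p`, so `k` is even exactly when `2` is a square mod `p`, that is,
when `p ≡ ±1 (mod 8)`. -/

section PowParity

variable {M : Type*} [Monoid M] {x : M} {N : ℕ}

theorem pow_add_mul_eq_pow (hx : x ^ N = 1) (m j : ℕ) : x ^ (m + N * j) = x ^ m := by
  rw [pow_add, pow_mul, hx, one_pow, mul_one]

theorem exists_pow_add_eq_pow (hx : x ^ (2 * N) = 1) (hN : 0 < N) (k m : ℕ) :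
    ∃ j, (j + k) % 2 = m % 2 ∧ x ^ (k + j) = x ^ m := by
  obtain ⟨j, hj⟩ : ∃ j, k + j = m + 2 * N * k := ⟨m + (2 * N - 1) * k, by
    rw [show 2 * N - 1 = 2 * (N - 1) + 1 by omega, show 2 * N = 2 * (N - 1) + 2 by omega]
    ring⟩
  refine ⟨j, ?_, by rw [hj, pow_add_mul_eq_pow hx]⟩
  rw [mul_assoc] at hj
  omega

theorem exists_lt_pow_two_mul_add_eq_iff (hx : orderOf x = 2 * N) (hN : 0 < N) (a : ℕ) (y : M) :
    (∃ n < N, x ^ (2 * n + a) = y) ↔ ∃ m, m % 2 = a % 2 ∧ x ^ m = y := by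
  have hx1 : x ^ (2 * N) = 1 := hx ▸ pow_orderOf_eq_one x
  constructor
  · rintro ⟨n, -, rfl⟩
    exact ⟨2 * n + a, by omega, rfl⟩
  · rintro ⟨m, hm, rfl⟩
    obtain ⟨j, hj, hxj⟩ := exists_pow_add_eq_pow hx1 hN a m
    obtain ⟨t, rfl⟩ : ∃ t, j = 2 * t := ⟨j / 2, by omega⟩
    refine ⟨t % N, Nat.mod_lt t hN, ?_⟩
    calc x ^ (2 * (t % N) + a)
        = x ^ (2 * (t % N) + a + 2 * N * (t / N)) := (pow_add_mul_eq_pow hx1 _ _).symm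
      _ = x ^ (a + 2 * t) := by congr 1; linarith [Nat.mod_add_div t N]
      _ = x ^ m := hxj

end PowParity

theorem exists_pow_eq_of_orderOf_eq_card {G : Type*} [Group G] [Finite G] {x : G}
    (hx : orderOf x = Nat.card G) (y : G) : ∃ k : ℕ, x ^ k = y := by
  have htop : Subgroup.zpowers x = ⊤ :=
    Subgroup.eq_top_of_card_eq _ (by rw [Nat.card_zpowers, hx])
  exact mem_powers_iff_mem_zpowers.mpr (htop ▸ Subgroup.mem_top y)

theorem ZMod.exists_pow_eq_of_orderOf_eq_totient {n : ℕ} [NeZero n] {x y : ZMod n}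
    (hx : orderOf x = n.totient) (hy : IsUnit y) : ∃ k : ℕ, x ^ k = y := by
  have hfin : IsOfFinOrder x := orderOf_pos_iff.mp (hx ▸ Nat.totient_pos.mpr (NeZero.pos n))
  obtain ⟨k, hk⟩ := exists_pow_eq_of_orderOf_eq_card (x := hfin.unit)
    (by rw [← orderOf_units, hfin.val_unit, hx, Nat.card_eq_fintype_card,
      ZMod.card_units_eq_totient]) hy.unit
  exact ⟨k, by simpa using congrArg Units.val hk⟩

theorem ZMod.isSquare_pow_iff_even {p : ℕ} [Fact p.Prime] (hp : p ≠ 2) {x : ZMod p}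
    (hx : orderOf x = p - 1) (k : ℕ) : IsSquare (x ^ k) ↔ Even k := by
  have hodd := Nat.odd_iff.mp ((Fact.out : p.Prime).odd_of_ne_two hp)
  have htwo := (Fact.out : p.Prime).two_le
  have hx0 : x ≠ 0 := by
    rintro rfl
    have := hx ▸ pow_orderOf_eq_one (0 : ZMod p)
    rw [zero_pow (show p - 1 ≠ 0 by omega)] at this
    exact zero_ne_one this
  rw [ZMod.euler_criterion p (pow_ne_zero k hx0), ← pow_mul, ← orderOf_dvd_iff_pow_eq_one, hx,
    show p - 1 = 2 * (p / 2) by omega, Nat.mul_dvd_mul_iff_right (show 0 < p / 2 by omega),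
    even_iff_two_dvd]

theorem Finset.eq_image_add_of_eq_image_add {G : Type*} [AddGroup G] [DecidableEq G] {c : G}
    (hc : c + c = 0) {s t : Finset G} (h : s = t.image (· + c)) : t = s.image (· + c) := by
  have hinv : (· + c) ∘ (· + c) = id := funext fun y => by simp [add_assoc, hc]
  rw [h, Finset.image_image, hinv, Finset.image_id]

theorem ZMod.natCast_self_add_self {p : ℕ} : (p : ZMod (2 * p)) + p = 0 := by
  rw [← two_mul]
  exact_mod_cast ZMod.natCast_self (2 * p)

theorem ZMod.natCast_self_mul_of_odd {p n : ℕ} (hn : Odd n) : (p : ZMod (2 * p)) * n = p := by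
  obtain ⟨s, rfl⟩ := hn
  have h2p : 2 * (p : ZMod (2 * p)) = 0 := by exact_mod_cast ZMod.natCast_self (2 * p)
  push_cast
  linear_combination s * h2p

theorem ZMod.isUnit_two_add_natCast {p : ℕ} (hp : Odd p) : IsUnit (2 + p : ZMod (2 * p)) := by
  have hcop : Nat.Coprime (2 + p) (2 * p) := Nat.Coprime.mul_right
    (by rw [add_comm, Nat.coprime_add_self_left]; exact Nat.coprime_two_right.mpr hp)
    (by rw [Nat.coprime_add_self_left]; exact Nat.coprime_two_left.mpr hp)
  exact_mod_cast (ZMod.isUnit_iff_coprime _ _).mpr hcop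

section CyclotomicClasses

variable {p g : ℕ}

theorem mem_Dcl_iff (hp : 3 ≤ p) (hodd : Odd p) (hg : orderOf (g : ZMod (2 * p)) = p - 1)
    {a : ℕ} {x : ZMod (2 * p)} :
    x ∈ Dcl p g a ↔ ∃ m, m % 2 = a % 2 ∧ (g : ZMod (2 * p)) ^ m = x := by
  have := Nat.odd_iff.mp hodd
  simp only [Dcl, Finset.mem_image, Finset.mem_range]
  exact exists_lt_pow_two_mul_add_eq_iff (by omega) (by omega) a x

theorem mem_Ecl_iff (hp : 3 ≤ p) (hodd : Odd p) (hg : orderOf (g : ZMod (2 * p)) = p - 1)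
    {a : ℕ} {x : ZMod (2 * p)} :
    x ∈ Ecl p g a ↔ ∃ m, m % 2 = a % 2 ∧ 2 * (g : ZMod (2 * p)) ^ m = x := by
  simp only [Ecl, Finset.mem_image, mem_Dcl_iff hp hodd hg]
  constructor
  · rintro ⟨-, ⟨m, hm, rfl⟩, rfl⟩
    exact ⟨m, hm, rfl⟩
  · rintro ⟨m, hm, rfl⟩
    exact ⟨_, ⟨m, hm, rfl⟩, rfl⟩

theorem Dcl_congr (hp : 3 ≤ p) (hodd : Odd p) (hg : orderOf (g : ZMod (2 * p)) = p - 1)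
    {a b : ℕ} (hab : a % 2 = b % 2) : Dcl p g a = Dcl p g b := by
  ext x
  simp only [mem_Dcl_iff hp hodd hg, hab]

theorem Ecl_congr (hp : 3 ≤ p) (hodd : Odd p) (hg : orderOf (g : ZMod (2 * p)) = p - 1)
    {a b : ℕ} (hab : a % 2 = b % 2) : Ecl p g a = Ecl p g b := by
  rw [Ecl, Ecl, Dcl_congr hp hodd hg hab]

theorem two_mul_pow_add_natCast (hg : Odd g) {k : ℕ}
    (hk : (g : ZMod (2 * p)) ^ k = 2 + p) (m : ℕ) :
    2 * (g : ZMod (2 * p)) ^ m + p = (g : ZMod (2 * p)) ^ (k + m) := by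
  have hpg := ZMod.natCast_self_mul_of_odd (p := p) (hg.pow (n := m))
  push_cast at hpg
  rw [pow_add, hk]
  linear_combination -hpg

theorem image_Ecl_add_eq_Dcl (hp : 3 ≤ p) (hodd : Odd p) (hgodd : Odd g)
    (hg : orderOf (g : ZMod (2 * p)) = p - 1) {k : ℕ} (hk : (g : ZMod (2 * p)) ^ k = 2 + p)
    (a : ℕ) : (Ecl p g a).image (· + (p : ZMod (2 * p))) = Dcl p g (a + k) := by
  have hg1 : (g : ZMod (2 * p)) ^ (2 * ((p - 1) / 2)) = 1 := by
    rw [show 2 * ((p - 1) / 2) = p - 1 by have := Nat.odd_iff.mp hodd; omega, ← hg]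
    exact pow_orderOf_eq_one _
  ext y
  simp only [Finset.mem_image, mem_Ecl_iff hp hodd hg, mem_Dcl_iff hp hodd hg]
  constructor
  · rintro ⟨-, ⟨m, hm, rfl⟩, rfl⟩
    exact ⟨k + m, by omega, (two_mul_pow_add_natCast hgodd hk m).symm⟩
  · rintro ⟨m, hm, rfl⟩
    obtain ⟨j, hj, hgj⟩ := exists_pow_add_eq_pow hg1 (by omega) k m
    exact ⟨_, ⟨j, by omega, rfl⟩, by rw [two_mul_pow_add_natCast hgodd hk, hgj]⟩

theorem image_Dcl_add_eq_Ecl (hp : 3 ≤ p) (hodd : Odd p) (hgodd : Odd g)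
    (hg : orderOf (g : ZMod (2 * p)) = p - 1) {k : ℕ} (hk : (g : ZMod (2 * p)) ^ k = 2 + p)
    (a : ℕ) : (Dcl p g a).image (· + (p : ZMod (2 * p))) = Ecl p g (a + k) :=
  (Finset.eq_image_add_of_eq_image_add ZMod.natCast_self_add_self <| by
    rw [image_Ecl_add_eq_Dcl hp hodd hgodd hg hk,
      Dcl_congr hp hodd hg (show (a + k + k) % 2 = a % 2 by omega)]).symm

end CyclotomicClasses

theorem stmt8_general (p g : ℕ) (hp : p.Prime) (hpodd : Odd p)
    (hgodd : Odd g)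
    (hg1 : orderOf (g : ZMod p) = p - 1)
    (hg2 : orderOf (g : ZMod (2 * p)) = p - 1)
    (i : ℕ) :
    ((p % 8 = 1 ∨ p % 8 = 7) →
      Dcl p g i = (Ecl p g i).image (fun v => v + (p : ZMod (2 * p))) ∧
      Ecl p g i = (Dcl p g i).image (fun v => v + (p : ZMod (2 * p)))) ∧
    ((p % 8 = 3 ∨ p % 8 = 5) →
      Dcl p g ((i + 1) % 2) = (Ecl p g i).image (fun v => v + (p : ZMod (2 * p))) ∧
      Ecl p g ((i + 1) % 2) = (Dcl p g i).image (fun v => v + (p : ZMod (2 * p)))) := by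
  have := Fact.mk hp
  have hp2 : p ≠ 2 := by rintro rfl; exact absurd hpodd (by decide)
  have hp3 : 3 ≤ p := by have := hp.two_le; have := Nat.odd_iff.mp hpodd; omega
  obtain ⟨k, hk⟩ := ZMod.exists_pow_eq_of_orderOf_eq_totient (n := 2 * p)
    (by rw [hg2, Nat.totient_mul (Nat.coprime_two_left.mpr hpodd), Nat.totient_two, one_mul,
      Nat.totient_prime hp]) (ZMod.isUnit_two_add_natCast hpodd)
  have hk_mod_p : (g : ZMod p) ^ k = 2 := by
    have := congrArg (ZMod.castHom (dvd_mul_left p 2) (ZMod p)) hk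
    rwa [map_pow, map_add, map_natCast, map_natCast, map_ofNat, ZMod.natCast_self,
      add_zero] at this
  have hk_parity : (p % 8 = 1 ∨ p % 8 = 7) ↔ k % 2 = 0 := by
    rw [← ZMod.exists_sq_eq_two_iff hp2, ← hk_mod_p, ZMod.isSquare_pow_iff_even hp2 hg1,
      Nat.even_iff]
  have hD := image_Ecl_add_eq_Dcl hp3 hpodd hgodd hg2 hk i
  have hE := image_Dcl_add_eq_Ecl hp3 hpodd hgodd hg2 hk i
  refine ⟨fun h8 => ?_, fun h8 => ?_⟩ <;>
    exact ⟨(Dcl_congr hp3 hpodd hg2 (by omega)).trans hD.symm,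
      (Ecl_congr hp3 hpodd hg2 (by omega)).trans hE.symm⟩

theorem stmt8 (p g : ℕ) (hp : p.Prime) (hpodd : Odd p)
    (hgodd : Odd g)
    (hg1 : orderOf (g : ZMod p) = p - 1)
    (hg2 : orderOf (g : ZMod (2 * p)) = p - 1)
    (i : ℕ) (hi : i < 2) :
    ((p % 8 = 1 ∨ p % 8 = 7) →
      Dcl p g i = (Ecl p g i).image (fun v => v + (p : ZMod (2 * p))) ∧
      Ecl p g i = (Dcl p g i).image (fun v => v + (p : ZMod (2 * p)))) ∧
    ((p % 8 = 3 ∨ p % 8 = 5) →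
      Dcl p g ((i + 1) % 2) = (Ecl p g i).image (fun v => v + (p : ZMod (2 * p))) ∧
      Ecl p g ((i + 1) % 2) = (Dcl p g i).image (fun v => v + (p : ZMod (2 * p)))) :=
  stmt8_general p g hp hpodd hgodd hg1 hg2 i
end

section
/- Assume p ≡ ±1 (mod 8). Then for each i ∈ {0,1}, identifying each class with its set of integer representatives in {0,1,...,2p-1}, one has E_i = {u + p : u ∈ D_i, u < p} ∪ {u - p : u ∈ D_i, u > p}. -/
open Polynomial

/-!
Since `p ≡ ±1 (mod 8)`, `2` is a square modulo `p`, hence `2 ≡ g^(2k) (mod p)` for some `k`;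
as both sides of `g^(2k) ≡ 2 + p` are odd, this holds modulo `2p` too. For odd `u` we have
`p * u = p = -p` in `Z_{2p}`, so `2u = (2 + p) u + p = g^(2k) u + p`. Multiplication by `g^(2k)`
permutes `D_i`, so `E_i = D_i + p`, and adding `p` to a representative `u ≠ p` of `Z_{2p}` gives
`u + p` or `u - p` according as `u < p` or `u > p`.
-/

lemma pow_two_mul_add_mem_image_range {M : Type*} [Monoid M] [DecidableEq M] {x : M} {m : ℕ}
    (hm : 0 < m) (hx : x ^ (2 * m) = 1) (i n : ℕ) :
    x ^ (2 * n + i) ∈ (Finset.range m).image (fun n => x ^ (2 * n + i)) := by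
  refine Finset.mem_image.mpr ⟨n % m, Finset.mem_range.mpr (Nat.mod_lt n hm), ?_⟩
  have hexp : 2 * (n % m) + i ≡ 2 * n + i [MOD 2 * m] :=
    ((Nat.mod_modEq n m).mul_left' 2).add_right i
  rw [pow_eq_pow_mod _ hx, hexp, ← pow_eq_pow_mod _ hx]

namespace ZMod

variable {p : ℕ}

lemma natCast_add_self_eq_zero : (p : ZMod (2 * p)) + p = 0 := by
  simpa [two_mul] using ZMod.natCast_self (2 * p)

lemma natCast_mul_natCast_of_odd {a : ℕ} (ha : Odd a) : (p : ZMod (2 * p)) * a = p := by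
  obtain ⟨k, rfl⟩ := ha
  have h2p : ((2 * p : ℕ) : ZMod (2 * p)) = 0 := ZMod.natCast_self _
  push_cast at h2p ⊢
  linear_combination k * h2p

lemma not_isUnit_natCast_self_mul_two (hp : p ≠ 1) : ¬ IsUnit (p : ZMod (2 * p)) := by
  rw [ZMod.isUnit_iff_coprime]
  exact fun h => hp (h.eq_one_of_dvd (dvd_mul_left p 2))

lemma natCast_eq_natCast_of_odd (hp : Odd p) {a b : ℕ} (ha : Odd a) (hb : Odd b)
    (h : (a : ZMod p) = b) : (a : ZMod (2 * p)) = b := by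
  rw [ZMod.natCast_eq_natCast_iff] at h ⊢
  refine (Nat.modEq_and_modEq_iff_modEq_mul (Nat.coprime_two_left.mpr hp)).mp ⟨?_, h⟩
  exact (Nat.odd_iff.mp ha).trans (Nat.odd_iff.mp hb).symm

lemma val_natCast_self_mul_two (hp : p ≠ 0) : (p : ZMod (2 * p)).val = p :=
  ZMod.val_natCast_of_lt (by omega)

lemma val_add_natCast_of_lt {u : ZMod (2 * p)} (hu : u.val < p) : (u + p).val = u.val + p := by
  have hval := val_natCast_self_mul_two (p := p) (by omega)
  rw [ZMod.val_add_of_lt, hval]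
  omega

lemma val_add_natCast_of_gt {u : ZMod (2 * p)} (hu : p < u.val) : (u + p).val = u.val - p := by
  rcases Nat.eq_zero_or_pos p with rfl | hp
  · simp
  have : NeZero (2 * p) := ⟨by omega⟩
  have hlt := u.val_lt
  rw [ZMod.val_add, val_natCast_self_mul_two (by omega), Nat.mod_eq_sub_mod (by omega),
    Nat.mod_eq_of_lt (by omega)]
  omega

lemma image_val_image_add_natCast (s : Finset (ZMod (2 * p))) (hs : ∀ u ∈ s, u.val ≠ p) :
    (s.image (· + (p : ZMod (2 * p)))).image ZMod.val =
      (s.filter (fun u => u.val < p)).image (fun u => u.val + p) ∪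
      (s.filter (fun u => p < u.val)).image (fun u => u.val - p) := by
  ext x
  simp only [Finset.image_image, Finset.mem_image, Finset.mem_union, Finset.mem_filter,
    Function.comp_apply]
  constructor
  · rintro ⟨u, hu, rfl⟩
    rcases lt_or_gt_of_ne (hs u hu) with h | h
    · exact .inl ⟨u, ⟨hu, h⟩, (val_add_natCast_of_lt h).symm⟩
    · exact .inr ⟨u, ⟨hu, h⟩, (val_add_natCast_of_gt h).symm⟩
  · rintro (⟨u, ⟨hu, h⟩, rfl⟩ | ⟨u, ⟨hu, h⟩, rfl⟩)
    · exact ⟨u, hu, val_add_natCast_of_lt h⟩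
    · exact ⟨u, hu, val_add_natCast_of_gt h⟩

end ZMod

section Cyclotomic

variable {p g : ℕ}

lemma exists_pow_two_mul_eq_two (hp : p.Prime) (hp8 : p % 8 = 1 ∨ p % 8 = 7)
    (hg : orderOf (g : ZMod p) = p - 1) : ∃ k, (g : ZMod p) ^ (2 * k) = 2 := by
  have : Fact p.Prime := ⟨hp⟩
  have hp2 : p ≠ 2 := by omega
  obtain ⟨c, hc⟩ := (ZMod.exists_sq_eq_two_iff hp2).mpr hp8
  have hc0 : c ≠ 0 := by
    rintro rfl
    have h2 : ((2 : ℕ) : ZMod p) = 0 := by exact_mod_cast hc.trans (mul_zero 0)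
    rw [ZMod.natCast_eq_zero_iff] at h2
    exact hp2 ((Nat.prime_dvd_prime_iff_eq hp Nat.prime_two).mp h2)
  have : NeZero (p - 1) := ⟨by have := hp.two_le; omega⟩
  obtain ⟨k, -, hk⟩ := (IsPrimitiveRoot.iff_orderOf.mpr hg).eq_pow_of_pow_eq_one
    (ZMod.pow_card_sub_one_eq_one hc0)
  exact ⟨k, by rw [pow_mul', sq, hk, hc]⟩

lemma exists_pow_two_mul_eq_two_add_natCast (hp : p.Prime) (hpodd : Odd p)
    (hp8 : p % 8 = 1 ∨ p % 8 = 7) (hgodd : Odd g) (hg : orderOf (g : ZMod p) = p - 1) :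
    ∃ k, (g : ZMod (2 * p)) ^ (2 * k) = 2 + p := by
  obtain ⟨k, hk⟩ := exists_pow_two_mul_eq_two hp hp8 hg
  have hmodp : ((g ^ (2 * k) : ℕ) : ZMod p) = ((2 + p : ℕ) : ZMod p) := by
    push_cast [ZMod.natCast_self]
    rw [hk, add_zero]
  refine ⟨k, ?_⟩
  exact_mod_cast ZMod.natCast_eq_natCast_of_odd hpodd hgodd.pow (even_two.add_odd hpodd) hmodp

lemma pow_mem_Dcl (hpodd : Odd p) (hp1 : 1 < p) (hg : (g : ZMod (2 * p)) ^ (p - 1) = 1)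
    (i n : ℕ) : (g : ZMod (2 * p)) ^ (2 * n + i) ∈ Dcl p g i := by
  have hpmod := Nat.odd_iff.mp hpodd
  have hhalf : 2 * ((p - 1) / 2) = p - 1 := by omega
  exact pow_two_mul_add_mem_image_range (by omega) (by rwa [hhalf]) i n

lemma image_pow_two_mul_mul_Dcl (hpodd : Odd p) (hp1 : 1 < p)
    (hg : (g : ZMod (2 * p)) ^ (p - 1) = 1) (i k : ℕ) :
    (Dcl p g i).image ((g : ZMod (2 * p)) ^ (2 * k) * ·) = Dcl p g i := by
  have hunit : IsUnit ((g : ZMod (2 * p)) ^ (2 * k)) := (IsUnit.of_pow_eq_one hg (by omega)).pow _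
  refine Finset.eq_of_subset_of_card_le ?_
    (Finset.card_image_of_injective _ hunit.mul_right_injective).ge
  intro x hx
  obtain ⟨u, hu, rfl⟩ := Finset.mem_image.mp hx
  obtain ⟨n, -, rfl⟩ := Finset.mem_image.mp hu
  rw [← pow_add, show 2 * k + (2 * n + i) = 2 * (k + n) + i by ring]
  exact pow_mem_Dcl hpodd hp1 hg i (k + n)

lemma val_ne_of_mem_Dcl (hp1 : 1 < p) (hg : (g : ZMod (2 * p)) ^ (p - 1) = 1) {i : ℕ}
    {u : ZMod (2 * p)} (hu : u ∈ Dcl p g i) : u.val ≠ p := by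
  obtain ⟨n, -, rfl⟩ := Finset.mem_image.mp hu
  intro h
  have : NeZero (2 * p) := ⟨by omega⟩
  have hpow : (g : ZMod (2 * p)) ^ (2 * n + i) = p := by
    rw [← ZMod.natCast_zmod_val ((g : ZMod (2 * p)) ^ (2 * n + i)), h]
  refine ZMod.not_isUnit_natCast_self_mul_two (p := p) (by omega) ?_
  exact hpow ▸ (IsUnit.of_pow_eq_one hg (by omega)).pow _

lemma Ecl_eq_image_add_natCast (hpodd : Odd p) (hp1 : 1 < p) (hgodd : Odd g)
    (hg : (g : ZMod (2 * p)) ^ (p - 1) = 1) {k : ℕ} (hk : (g : ZMod (2 * p)) ^ (2 * k) = 2 + p)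
    (i : ℕ) : Ecl p g i = (Dcl p g i).image (· + (p : ZMod (2 * p))) := by
  have hdouble : ∀ u ∈ Dcl p g i, 2 * u = (g : ZMod (2 * p)) ^ (2 * k) * u + p := by
    intro u hu
    obtain ⟨n, -, rfl⟩ := Finset.mem_image.mp hu
    have hodd := ZMod.natCast_mul_natCast_of_odd (p := p) (hgodd.pow (n := 2 * n + i))
    push_cast at hodd
    rw [hk]
    linear_combination -hodd - ZMod.natCast_add_self_eq_zero
  calc Ecl p g i = (Dcl p g i).image (fun u => (g : ZMod (2 * p)) ^ (2 * k) * u + p) :=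
        Finset.image_congr hdouble
    _ = ((Dcl p g i).image ((g : ZMod (2 * p)) ^ (2 * k) * ·)).image
          (· + (p : ZMod (2 * p))) := by
        rw [Finset.image_image]; rfl
    _ = (Dcl p g i).image (· + (p : ZMod (2 * p))) := by
        rw [image_pow_two_mul_mul_Dcl hpodd hp1 hg]

end Cyclotomic

theorem stmt9_general (p g : ℕ) (hp : p.Prime) (hpodd : Odd p)
    (hp8 : p % 8 = 1 ∨ p % 8 = 7)
    (hgodd : Odd g)
    (hg1 : orderOf (g : ZMod p) = p - 1)
    (hg2 : orderOf (g : ZMod (2 * p)) = p - 1)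
    (i : ℕ) :
    (Ecl p g i).image ZMod.val =
      ((Dcl p g i).filter (fun u => u.val < p)).image (fun u => u.val + p) ∪
      ((Dcl p g i).filter (fun u => p < u.val)).image (fun u => u.val - p) := by
  have hp1 := hp.one_lt
  have hg : (g : ZMod (2 * p)) ^ (p - 1) = 1 := hg2 ▸ pow_orderOf_eq_one _
  obtain ⟨k, hk⟩ := exists_pow_two_mul_eq_two_add_natCast hp hpodd hp8 hgodd hg1
  rw [Ecl_eq_image_add_natCast hpodd hp1 hgodd hg hk]
  exact ZMod.image_val_image_add_natCast _ fun u hu => val_ne_of_mem_Dcl hp1 hg hu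

theorem stmt9 (p g : ℕ) (hp : p.Prime) (hpodd : Odd p)
    (hp8 : p % 8 = 1 ∨ p % 8 = 7)
    (hgodd : Odd g)
    (hg1 : orderOf (g : ZMod p) = p - 1)
    (hg2 : orderOf (g : ZMod (2 * p)) = p - 1)
    (i : ℕ) (hi : i < 2) :
    (Ecl p g i).image ZMod.val =
      ((Dcl p g i).filter (fun u => u.val < p)).image (fun u => u.val + p) ∪
      ((Dcl p g i).filter (fun u => p < u.val)).image (fun u => u.val - p) :=
  stmt9_general p g hp hpodd hp8 hgodd hg1 hg2 i
end

section
/- Let [i,j] = |(1 + D_i) ∩ E_j| where 1 + D_i = {(1 + u) mod 2p : u ∈ D_i}. Then [0,0] equals (p-5)/4 if p ≡ 1 (mod 8), (p-3)/4 if p ≡ 7 (mod 8), (p-1)/4 if p ≡ 5 (mod 8), and (p+1)/4 if p ≡ 3 (mod 8); and [0,1] equals (p-1)/4 if p ≡ 1 (mod 8), (p+1)/4 if p ≡ 7 (mod 8), (p-5)/4 if p ≡ 5 (mod 8), and (p-3)/4 if p ≡ 3 (mod 8). -/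
open Polynomial

/-! Since `g` is odd, every element of `D_i` is odd, so `1 + D_0` and `E_j` consist of even
residues, and on even residues reduction modulo `p` is injective (Chinese remainder theorem).
Modulo `p`, with `g` a primitive root, `D_0` and `D_1` become the quadratic residues and
nonresidues, so `[0, j]` counts the `a ∈ 𝔽_p` with `χ(a - 1) = 1` and `χ(a) = b := (-1)^j χ(2)`.
Summing `(1 + χ(a - 1))(1 + b χ(a))` over `𝔽_p`, using `∑ χ = 0` and the Jacobi sum
`J(χ, χ) = -χ(-1)`, gives `4 [0, j] = p - 2 - 2b - χ(-1)`; the supplementary laws for `χ(-1)`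
and `χ(2)` then yield the four cases. -/

open Finset

section QuadraticCharCount

variable {F : Type*} [Field F] [Fintype F] [DecidableEq F]

local notation "χ" => quadraticChar F

lemma sum_quadraticChar_sub_one_mul_quadraticChar (hF : ringChar F ≠ 2) :
    ∑ a : F, χ (a - 1) * χ a = -1 := by
  have hJ := jacobiSum_nontrivial_inv (quadraticChar_ne_one hF)
  rw [(quadraticChar_isQuadratic F).inv, jacobiSum] at hJ
  calc ∑ a : F, χ (a - 1) * χ a = χ (-1) * ∑ a : F, χ a * χ (1 - a) := by
        rw [mul_sum]
        refine sum_congr rfl fun a _ => ?_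
        rw [← neg_sub, neg_eq_neg_one_mul (1 - a), map_mul]
        ring
    _ = -1 := by
        rw [hJ, mul_neg, ← sq, quadraticChar_sq_one (neg_ne_zero.mpr one_ne_zero)]

lemma sum_one_add_quadraticChar_sub_one_mul (hF : ringChar F ≠ 2) (b : ℤ) :
    ∑ a : F, (1 + χ (a - 1)) * (1 + b * χ a) = Fintype.card F - b := by
  have hshift : ∑ a : F, χ (a - 1) = 0 := by
    rw [Fintype.sum_equiv (Equiv.subRight 1) (fun a => χ (a - 1)) (fun a => χ a) fun _ => rfl]
    exact quadraticChar_sum_zero hF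
  have hexpand : ∀ a : F, (1 + χ (a - 1)) * (1 + b * χ a)
      = 1 + χ (a - 1) + b * χ a + b * (χ (a - 1) * χ a) := fun a => by ring
  simp only [hexpand, sum_add_distrib, ← mul_sum, hshift, quadraticChar_sum_zero hF,
    sum_quadraticChar_sub_one_mul_quadraticChar hF, sum_const, card_univ, nsmul_eq_mul]
  ring

lemma one_add_quadraticChar_sub_one_mul_eq_ite {a : F} (h0 : a ≠ 0) (h1 : a ≠ 1) {b : ℤ}
    (hb : b = 1 ∨ b = -1) :
    (1 + χ (a - 1)) * (1 + b * χ a) = if χ (a - 1) = 1 ∧ χ a = b then 4 else 0 := by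
  rcases quadraticChar_dichotomy (sub_ne_zero.mpr h1) with h | h <;>
    rcases quadraticChar_dichotomy h0 with h' | h' <;>
    rcases hb with rfl | rfl <;> simp [h, h']

theorem card_filter_quadraticChar_sub_one_eq_one_and_eq (hF : ringChar F ≠ 2) {b : ℤ}
    (hb : b = 1 ∨ b = -1) :
    (#{a : F | χ (a - 1) = 1 ∧ χ a = b} : ℤ) * 4 = Fintype.card F - 2 - 2 * b - χ (-1) := by
  let f : F → ℤ := fun a => (1 + χ (a - 1)) * (1 + b * χ a)
  let N : F → ℤ := fun a => if χ (a - 1) = 1 ∧ χ a = b then 4 else 0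
  have hN : ∑ a, N a = #{a : F | χ (a - 1) = 1 ∧ χ a = b} * 4 := by
    simp only [N, ← sum_filter, sum_const, nsmul_eq_mul]
  have hb0 : b ≠ 0 := by rcases hb with rfl | rfl <;> norm_num
  have hrest : ∑ a, (f a - N a) = (1 + χ (-1)) + (1 + b) := by
    rw [Fintype.sum_eq_add 0 1 zero_ne_one fun a ha =>
      sub_eq_zero.mpr (one_add_quadraticChar_sub_one_mul_eq_ite ha.1 ha.2 hb)]
    simp [hb0.symm]
  have htotal : ∑ a, f a = ∑ a, N a + ∑ a, (f a - N a) := by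
    rw [← sum_add_distrib]; simp
  rw [sum_one_add_quadraticChar_sub_one_mul hF b, hN, hrest] at htotal
  linarith

lemma quadraticChar_eq_neg_one_of_isPrimitiveRoot (hF : ringChar F ≠ 2) {g : F}
    (hg : IsPrimitiveRoot g (Fintype.card F - 1)) : χ g = -1 := by
  have hodd := FiniteField.odd_card_of_char_ne_two hF
  have hq : 1 < Fintype.card F := Fintype.one_lt_card
  have hg0 : g ≠ 0 := fun h => by
    simpa [h, zero_pow (show Fintype.card F - 1 ≠ 0 by omega)] using hg.pow_eq_one
  rw [quadraticChar_neg_one_iff_not_isSquare, FiniteField.isSquare_iff hF hg0]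
  exact hg.pow_ne_one_of_pos_of_lt (by omega) (by omega)

theorem image_pow_two_mul_add_eq_filter (hF : ringChar F ≠ 2) {g : F}
    (hg : IsPrimitiveRoot g (Fintype.card F - 1)) {i : ℕ} (hi : i < 2) :
    (range ((Fintype.card F - 1) / 2)).image (fun n => g ^ (2 * n + i))
      = ({a | χ a = (-1) ^ i} : Finset F) := by
  have hχg := quadraticChar_eq_neg_one_of_isPrimitiveRoot hF hg
  have hodd := FiniteField.odd_card_of_char_ne_two hF
  have hq : 1 < Fintype.card F := Fintype.one_lt_card
  ext a
  simp only [mem_image, mem_range, mem_filter, mem_univ, true_and]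
  constructor
  · rintro ⟨n, -, rfl⟩
    rw [map_pow, hχg, pow_add, pow_mul, neg_one_sq, one_pow, one_mul]
  · intro ha
    have ha0 : a ≠ 0 := by
      rintro rfl
      interval_cases i <;> simp at ha
    have : NeZero (Fintype.card F - 1) := ⟨by omega⟩
    obtain ⟨m, hm, rfl⟩ := hg.eq_pow_of_pow_eq_one (FiniteField.pow_card_sub_one_eq_one a ha0)
    have hmi : m % 2 = i := by
      rw [map_pow, hχg, neg_one_pow_eq_pow_mod_two, neg_one_pow_eq_pow_mod_two (n := i)] at ha
      rcases Nat.mod_two_eq_zero_or_one m with h | h <;> interval_cases i <;> simp_all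
    exact ⟨m / 2, by omega, by rw [← hmi, Nat.div_add_mod]⟩

lemma image_one_add_filter_quadraticChar (s : ℤ) :
    ({a | χ a = s} : Finset F).image (1 + ·) = ({a | χ (a - 1) = s} : Finset F) := by
  ext a
  simp only [mem_image, mem_filter, mem_univ, true_and]
  exact ⟨fun ⟨u, hu, h⟩ => by rwa [← h, add_sub_cancel_left], fun h => ⟨a - 1, h, by ring⟩⟩

lemma image_mul_filter_quadraticChar {c : F} (hc : c ≠ 0) (s : ℤ) :
    ({a | χ a = s} : Finset F).image (c * ·) = ({a | χ a = s * χ c} : Finset F) := by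
  ext a
  simp only [mem_image, mem_filter, mem_univ, true_and]
  constructor
  · rintro ⟨u, hu, rfl⟩
    rw [map_mul, hu, mul_comm]
  · intro ha
    refine ⟨c⁻¹ * a, ?_, mul_inv_cancel_left₀ hc a⟩
    have hχc : χ c ≠ 0 := fun h => hc (quadraticChar_eq_zero_iff.mp h)
    rw [← mul_inv_cancel_left₀ hc a, map_mul, mul_comm s] at ha
    exact mul_left_cancel₀ hχc ha

end QuadraticCharCount

lemma ZMod.eq_of_castHom_eq_of_castHom_eq {m n : ℕ} (h : m.Coprime n) {x y : ZMod (m * n)}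
    (hm : ZMod.castHom (dvd_mul_right m n) (ZMod m) x
      = ZMod.castHom (dvd_mul_right m n) (ZMod m) y)
    (hn : ZMod.castHom (dvd_mul_left n m) (ZMod n) x
      = ZMod.castHom (dvd_mul_left n m) (ZMod n) y) : x = y :=
  (ZMod.chineseRemainder h).injective <| by
    simp only [ZMod.chineseRemainder, RingEquiv.coe_mk, Equiv.coe_fn_mk, ZMod.castHom_apply,
      Prod.ext_iff, Prod.fst_zmod_cast, Prod.snd_zmod_cast]
    exact ⟨hm, hn⟩

section ReductionModP

variable {p g : ℕ}

lemma castHom_two_eq_one_of_mem_Dcl (hg : Odd g) {i : ℕ} {u : ZMod (2 * p)}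
    (hu : u ∈ Dcl p g i) : ZMod.castHom (dvd_mul_right 2 p) (ZMod 2) u = 1 := by
  obtain ⟨n, -, rfl⟩ := mem_image.mp hu
  rw [map_pow, map_natCast, hg.natCast_zmod_two, one_pow]

lemma image_castHom_Dcl (i : ℕ) :
    (Dcl p g i).image (ZMod.castHom (dvd_mul_left p 2) (ZMod p))
      = (range ((p - 1) / 2)).image fun n => (g : ZMod p) ^ (2 * n + i) := by
  simp only [Dcl, image_image, Function.comp_def, map_pow, map_natCast]

lemma card_one_add_Dcl_inter_Ecl (hp : Odd p) (hg : Odd g) (j : ℕ) :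
    #((Dcl p g 0).image (1 + ·) ∩ Ecl p g j)
      = #(((Dcl p g 0).image (ZMod.castHom (dvd_mul_left p 2) (ZMod p))).image (1 + ·)
          ∩ ((Dcl p g j).image (ZMod.castHom (dvd_mul_left p 2) (ZMod p))).image (2 * ·)) := by
  set π := ZMod.castHom (dvd_mul_left p 2) (ZMod p)
  set ρ := ZMod.castHom (dvd_mul_right 2 p) (ZMod 2)
  have heven : ∀ x ∈ (Dcl p g 0).image (1 + ·) ∪ Ecl p g j, ρ x = 0 := by
    intro x hx
    rcases mem_union.mp hx with hx | hx <;> obtain ⟨u, hu, rfl⟩ := mem_image.mp hx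
    · rw [map_add, map_one, castHom_two_eq_one_of_mem_Dcl hg hu]
      decide
    · rw [map_mul, map_ofNat, show (2 : ZMod 2) = 0 from rfl, zero_mul]
  have hinj : Set.InjOn π (↑((Dcl p g 0).image (1 + ·)) ∪ ↑(Ecl p g j)) :=
    fun x hx y hy hxy => ZMod.eq_of_castHom_eq_of_castHom_eq (Nat.coprime_two_left.mpr hp)
      (by rw [heven x (mem_union.mpr hx), heven y (mem_union.mpr hy)]) hxy
  have hinj' : Set.InjOn π ↑((Dcl p g 0).image (1 + ·) ∩ Ecl p g j) :=
    hinj.mono (by rw [coe_inter]; exact Set.inter_subset_left.trans Set.subset_union_left)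
  rw [← card_image_of_injOn hinj', image_inter_of_injOn _ _ hinj, Ecl, image_image, image_image,
    image_image, image_image]
  congr! 3 <;> funext u <;> simp [map_ofNat]

end ReductionModP

section PrimeModulus

variable {p g : ℕ} [Fact p.Prime]

lemma image_castHom_Dcl_eq_filter (hp2 : p ≠ 2) (hg : orderOf (g : ZMod p) = p - 1) {i : ℕ}
    (hi : i < 2) :
    (Dcl p g i).image (ZMod.castHom (dvd_mul_left p 2) (ZMod p))
      = ({a | quadraticChar (ZMod p) a = (-1) ^ i} : Finset (ZMod p)) := by
  have hF : ringChar (ZMod p) ≠ 2 := by rwa [ZMod.ringChar_zmod_n]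
  have hprim : IsPrimitiveRoot (g : ZMod p) (Fintype.card (ZMod p) - 1) := by
    rw [ZMod.card, ← hg]
    exact .orderOf _
  rw [image_castHom_Dcl, ← image_pow_two_mul_add_eq_filter hF hprim hi, ZMod.card]

theorem four_mul_card_one_add_Dcl_inter_Ecl (hp2 : p ≠ 2) (hgodd : Odd g)
    (hg : orderOf (g : ZMod p) = p - 1) {j : ℕ} (hj : j < 2) :
    (#((Dcl p g 0).image (1 + ·) ∩ Ecl p g j) : ℤ) * 4
      = p - 2 - 2 * ((-1) ^ j * ZMod.χ₈ p) - ZMod.χ₄ p := by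
  have hF : ringChar (ZMod p) ≠ 2 := by rwa [ZMod.ringChar_zmod_n]
  have hpodd : Odd p := (Fact.out : p.Prime).odd_of_ne_two hp2
  have h2 : (2 : ZMod p) ≠ 0 := Ring.two_ne_zero hF
  have hb : (-1) ^ j * quadraticChar (ZMod p) 2 = 1
      ∨ (-1) ^ j * quadraticChar (ZMod p) 2 = -1 := by
    rcases quadraticChar_dichotomy h2 with h | h <;> interval_cases j <;> simp [h]
  rw [card_one_add_Dcl_inter_Ecl hpodd hgodd, image_castHom_Dcl_eq_filter hp2 hg two_pos,
    image_castHom_Dcl_eq_filter hp2 hg hj, pow_zero, image_one_add_filter_quadraticChar,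
    image_mul_filter_quadraticChar h2, ← filter_and,
    card_filter_quadraticChar_sub_one_eq_one_and_eq hF hb, ZMod.card,
    quadraticChar_two hF, quadraticChar_neg_one hF, ZMod.card]

end PrimeModulus

theorem stmt10_general (p g : ℕ) (hp : p.Prime) (hpodd : Odd p)
    (hgodd : Odd g)
    (hg1 : orderOf (g : ZMod p) = p - 1) :
    (p % 8 = 1 →
      ((Dcl p g 0).image (fun u => 1 + u) ∩ Ecl p g 0).card = (p - 5) / 4 ∧
      ((Dcl p g 0).image (fun u => 1 + u) ∩ Ecl p g 1).card = (p - 1) / 4) ∧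
    (p % 8 = 7 →
      ((Dcl p g 0).image (fun u => 1 + u) ∩ Ecl p g 0).card = (p - 3) / 4 ∧
      ((Dcl p g 0).image (fun u => 1 + u) ∩ Ecl p g 1).card = (p + 1) / 4) ∧
    (p % 8 = 5 →
      ((Dcl p g 0).image (fun u => 1 + u) ∩ Ecl p g 0).card = (p - 1) / 4 ∧
      ((Dcl p g 0).image (fun u => 1 + u) ∩ Ecl p g 1).card = (p - 5) / 4) ∧
    (p % 8 = 3 →
      ((Dcl p g 0).image (fun u => 1 + u) ∩ Ecl p g 0).card = (p + 1) / 4 ∧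
      ((Dcl p g 0).image (fun u => 1 + u) ∩ Ecl p g 1).card = (p - 3) / 4) := by
  have : Fact p.Prime := ⟨hp⟩
  have hp2 : p ≠ 2 := by
    rintro rfl
    exact absurd hpodd (by decide)
  have h0 := four_mul_card_one_add_Dcl_inter_Ecl hp2 hgodd hg1 (j := 0) two_pos
  have h1 := four_mul_card_one_add_Dcl_inter_Ecl hp2 hgodd hg1 (j := 1) one_lt_two
  rw [ZMod.χ₄_nat_eq_if_mod_four, ZMod.χ₈_nat_eq_if_mod_eight] at h0 h1
  have := Nat.odd_iff.mp hpodd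
  simp only [pow_zero, pow_one] at h0 h1
  refine ⟨?_, ?_, ?_, ?_⟩ <;> intro h8 <;> split_ifs at h0 h1 <;> constructor <;> omega

theorem stmt10 (p g : ℕ) (hp : p.Prime) (hpodd : Odd p)
    (hgodd : Odd g)
    (hg1 : orderOf (g : ZMod p) = p - 1)
    (hg2 : orderOf (g : ZMod (2 * p)) = p - 1) :
    (p % 8 = 1 →
      ((Dcl p g 0).image (fun u => 1 + u) ∩ Ecl p g 0).card = (p - 5) / 4 ∧
      ((Dcl p g 0).image (fun u => 1 + u) ∩ Ecl p g 1).card = (p - 1) / 4) ∧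
    (p % 8 = 7 →
      ((Dcl p g 0).image (fun u => 1 + u) ∩ Ecl p g 0).card = (p - 3) / 4 ∧
      ((Dcl p g 0).image (fun u => 1 + u) ∩ Ecl p g 1).card = (p + 1) / 4) ∧
    (p % 8 = 5 →
      ((Dcl p g 0).image (fun u => 1 + u) ∩ Ecl p g 0).card = (p - 1) / 4 ∧
      ((Dcl p g 0).image (fun u => 1 + u) ∩ Ecl p g 1).card = (p - 5) / 4) ∧
    (p % 8 = 3 →
      ((Dcl p g 0).image (fun u => 1 + u) ∩ Ecl p g 0).card = (p + 1) / 4 ∧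
      ((Dcl p g 0).image (fun u => 1 + u) ∩ Ecl p g 1).card = (p - 3) / 4) :=
  stmt10_general p g hp hpodd hgodd hg1
end

section
/- Assume S_0(γ) is a unit of R. Then: (I) S(γ^0) = S(1) equals the image of p+1 in R and S(γ^p) = S(-1) = 2; (II) if p ≡ ±3 (mod 8), then S(γ^v) is a unit of R for every v ∈ D_0 ∪ D_1 ∪ E_0 ∪ E_1; (III) if p ≡ ±1 (mod 8), then S(γ^v) = 0 for every v ∈ D_0 ∪ D_1 ∪ E_0 and S(γ^v) = 2 for every v ∈ E_1. -/
open Polynomial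

/-- The Galois ring `GR(4^r,4) = Z_4[X]/(f)` for a basic irreducible polynomial `f`. -/
abbrev GaloisR (f : Polynomial (ZMod 4)) : Type :=
  Polynomial (ZMod 4) ⧸ Ideal.span {f}

/-- `S_0(γ) = Σ_{u ∈ D_0} γ^u`, computed with the integer representatives of `D_0`. -/
noncomputable def S0val (p g : ℕ) (f : Polynomial (ZMod 4)) (γ : (GaloisR f)ˣ) : GaloisR f :=
  ∑ u ∈ Dcl p g 0, (γ : GaloisR f) ^ u.val

/-!
Write `γ = -β`. For `x ∈ Z_{2p}` we have `γ^x = (-1)^(x mod 2) β^(x mod p)`, so each sum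
`Σ_{x ∈ u D_0} γ^x` equals `±η_m`, where `η_m = Σ_n β^(g^(2n+m) mod p)` are the two Gauss periods
of the quadratic residues mod `p`, `g^m ≡ u (mod p)`, and the sign is `+` iff `u` is even. Hence
every `S(γ^v)` is an integral combination of `η_0` and `η_1`, and `η_0 + η_1 = Σ_{y ≠ 0} β^y = -1`
because `β - 1` is a unit of the local ring `R`. Writing `2 ≡ g^t (mod p)`, the parity of `t` is
the quadratic character of `2`, i.e. it is read off from `p mod 8`. If `t` is odd, every
`S(γ^v) ≡ 1 (mod 2)`, hence is a unit. If `t` is even, `S(γ^v)` is `0` on `D_0 ∪ D_1` and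
`2 η_j + 2` on `E_j`; modulo `2`, Frobenius gives `η_0^2 ≡ η_t = η_0`, and as `η_0 = -S_0(γ)` is
a unit, `η_0 ≡ 1`, i.e. `2 η_0 = 2` and `2 η_1 = 0`.
-/

open Finset Polynomial

theorem IsPrimitiveRoot.pow_eq_pow_iff_modEq {M : Type*} [CommMonoid M] {ζ : M} {k : ℕ}
    (h : IsPrimitiveRoot ζ k) (hk : k ≠ 0) {a b : ℕ} :
    ζ ^ a = ζ ^ b ↔ a ≡ b [MOD k] := by
  rw [h.eq_orderOf]
  exact (h.isOfFinOrder hk).pow_eq_pow_iff_modEq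

theorem pow_eq_pow_val_natCast {M : Type*} [Monoid M] {b : M} {n : ℕ} (hb : b ^ n = 1) (k : ℕ) :
    b ^ k = b ^ (k : ZMod n).val := by
  rw [ZMod.val_natCast, ← pow_eq_pow_mod k hb]

theorem Finset.sum_range_two_mul {M : Type*} [AddCommMonoid M] (f : ℕ → M) (n : ℕ) :
    ∑ k ∈ range (2 * n), f k = ∑ i ∈ range n, (f (2 * i) + f (2 * i + 1)) := by
  induction n with
  | zero => simp
  | succ n ih =>
    rw [mul_add, mul_one, sum_range_succ, sum_range_succ, sum_range_succ, ih, add_assoc]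

namespace ZMod

theorem sum_comp_val {M : Type*} [AddCommMonoid M] (n : ℕ) [NeZero n] (F : ℕ → M) :
    ∑ x : ZMod n, F x.val = ∑ i ∈ range n, F i :=
  sum_nbij' val (↑) (fun a _ => mem_range.2 (val_lt a)) (fun _ _ => mem_univ _)
    (fun a _ => natCast_zmod_val a) (fun _ ha => val_cast_of_lt (mem_range.1 ha)) (fun _ _ => rfl)

theorem eq_of_castHom_eq {m n : ℕ} [NeZero (m * n)] (h : m.Coprime n) {x y : ZMod (m * n)}
    (hm : castHom (dvd_mul_right m n) (ZMod m) x = castHom (dvd_mul_right m n) (ZMod m) y)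
    (hn : castHom (dvd_mul_left n m) (ZMod n) x = castHom (dvd_mul_left n m) (ZMod n) y) :
    x = y := by
  rw [← natCast_zmod_val x, ← natCast_zmod_val y, natCast_eq_natCast_iff]
  simp only [castHom_apply, ← natCast_val, natCast_eq_natCast_iff] at hm hn
  exact (Nat.modEq_and_modEq_iff_modEq_mul h).1 ⟨hm, hn⟩

theorem eq_zero_or_eq_one_of_two (a : ZMod 2) : a = 0 ∨ a = 1 := by
  revert a
  decide

theorem two_ne_zero_of_odd {p : ℕ} [Fact p.Prime] (hp : Odd p) : (2 : ZMod p) ≠ 0 := by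
  intro h
  have h2 := (natCast_eq_zero_iff 2 p).1 (by exact_mod_cast h)
  obtain rfl := (Nat.prime_dvd_prime_iff_eq Fact.out Nat.prime_two).1 h2
  exact absurd hp (by decide)

abbrev fourToTwo : ZMod 4 →+* ZMod 2 :=
  castHom (by norm_num : (2:ℕ) ∣ 4) (ZMod 2)

theorem ker_fourToTwo : RingHom.ker fourToTwo = Ideal.span {2} := by
  ext z
  rw [RingHom.mem_ker, Ideal.mem_span_singleton']
  revert z
  decide

end ZMod

section CharFour

variable {A : Type*} [CommRing A] [Algebra (ZMod 4) A]

theorem four_eq_zero : (4 : A) = 0 := by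
  rw [← map_ofNat (algebraMap (ZMod 4) A) 4]
  simp [show (4 : ZMod 4) = 0 by decide]

theorem isUnit_add_two_mul {u : A} (hu : IsUnit u) (y : A) : IsUnit (u + 2 * y) :=
  IsNilpotent.isUnit_add_left_of_commute
    ⟨2, by rw [mul_pow, show (2 : A) ^ 2 = 4 by norm_num, four_eq_zero, zero_mul]⟩ hu
    (Commute.all _ _)

end CharFour

namespace GaloisR

variable {f : (ZMod 4)[X]}

abbrev ResidueField (f : (ZMod 4)[X]) : Type :=
  (ZMod 2)[X] ⧸ Ideal.span {f.map ZMod.fourToTwo}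

noncomputable def residue (f : (ZMod 4)[X]) : GaloisR f →+* ResidueField f :=
  Ideal.quotientMap _ (mapRingHom ZMod.fourToTwo)
    (Ideal.span_le.2 <| Set.singleton_subset_iff.2 <| Ideal.subset_span rfl)

theorem residue_mk (q : (ZMod 4)[X]) :
    residue f (Ideal.Quotient.mk _ q) = Ideal.Quotient.mk _ (q.map ZMod.fourToTwo) :=
  Ideal.quotientMap_mk

theorem residue_surjective : Function.Surjective (residue f) :=
  Ideal.quotientMap_surjective (map_surjective _ (ZMod.ringHom_surjective ZMod.fourToTwo))

theorem exists_eq_two_mul_of_residue_eq_zero {x : GaloisR f} (hx : residue f x = 0) :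
    ∃ y, x = 2 * y := by
  obtain ⟨q, rfl⟩ := Ideal.Quotient.mk_surjective x
  rw [residue_mk, Ideal.Quotient.eq_zero_iff_mem, Ideal.mem_span_singleton] at hx
  obtain ⟨b, hb⟩ := hx
  obtain ⟨B, rfl⟩ := map_surjective _ (ZMod.ringHom_surjective ZMod.fourToTwo) b
  have hker : q - f * B ∈ RingHom.ker (mapRingHom ZMod.fourToTwo) := by
    simp [hb, Polynomial.map_mul]
  rw [ker_mapRingHom, ZMod.ker_fourToTwo, Ideal.map_span, Set.image_singleton,
    Ideal.mem_span_singleton, C_ofNat] at hker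
  obtain ⟨H, hH⟩ := hker
  refine ⟨Ideal.Quotient.mk _ H, ?_⟩
  rw [show q = f * B + 2 * H by linear_combination hH]
  simp [Ideal.Quotient.eq_zero_iff_mem.2 (Ideal.mem_span_singleton_self f), map_ofNat]

theorem isUnit_of_residue_ne_zero (hf : Irreducible (f.map ZMod.fourToTwo)) {x : GaloisR f}
    (hx : residue f x ≠ 0) : IsUnit x := by
  have := PrincipalIdealRing.isMaximal_of_irreducible hf
  obtain ⟨c, hc⟩ := Ideal.Quotient.exists_inv hx
  obtain ⟨y, rfl⟩ := residue_surjective c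
  obtain ⟨z, hz⟩ := exists_eq_two_mul_of_residue_eq_zero (x := x * y - 1) (by simp [hc])
  have hxy : IsUnit (x * y) := by
    rw [show x * y = 1 + 2 * z by linear_combination hz]
    exact isUnit_add_two_mul isUnit_one z
  exact isUnit_of_mul_isUnit_left hxy

theorem charP_residueField (hf : Irreducible (f.map ZMod.fourToTwo)) :
    CharP (ResidueField f) 2 := by
  have := PrincipalIdealRing.isMaximal_of_irreducible hf
  exact charP_of_injective_algebraMap' (ZMod 2) 2

theorem geom_sum_eq_zero (hf : Irreducible (f.map ZMod.fourToTwo)) {β : GaloisR f} {p : ℕ}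
    (hβ : β ^ p = 1) (hβ2 : β ^ 2 ≠ 1) : ∑ i ∈ range p, β ^ i = 0 := by
  have hu : IsUnit (β - 1) := by
    refine isUnit_of_residue_ne_zero hf fun h => hβ2 ?_
    obtain ⟨y, hy⟩ := exists_eq_two_mul_of_residue_eq_zero h
    linear_combination (β + 1 + 2 * y) * hy + (y + y ^ 2) * four_eq_zero (A := GaloisR f)
  rw [← hu.mul_left_eq_zero, geom_sum_mul, hβ, sub_self]

theorem two_mul_eq_two_of_residue_sq {x : GaloisR f} (hx : IsUnit x)
    (h : residue f x ^ 2 = residue f x) : 2 * x = 2 := by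
  obtain ⟨y, hy⟩ := exists_eq_two_mul_of_residue_eq_zero (x := x ^ 2 - x) (by simp [h])
  have hx0 : x * (2 * x - 2) = 0 := by
    linear_combination 2 * hy + y * four_eq_zero (A := GaloisR f)
  exact sub_eq_zero.1 (hx.mul_right_eq_zero.1 hx0)

end GaloisR

def modTwo (p : ℕ) : ZMod (2 * p) →+* ZMod 2 :=
  ZMod.castHom (dvd_mul_right 2 p) (ZMod 2)

def modP (p : ℕ) : ZMod (2 * p) →+* ZMod p :=
  ZMod.castHom (dvd_mul_left p 2) (ZMod p)

section CyclotomicClasses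

variable {p g : ℕ}

@[simp]
theorem modTwo_two : modTwo p 2 = 0 := by
  rw [map_ofNat]
  rfl

@[simp]
theorem modP_two : modP p 2 = 2 :=
  map_ofNat _ 2

theorem modTwo_natCast_of_odd {n : ℕ} (hn : Odd n) : modTwo p (n : ZMod (2 * p)) = 1 := by
  simp [ZMod.natCast_eq_one_iff_odd.2 hn]

theorem modTwo_gpow (hg : Odd g) (k : ℕ) : modTwo p ((g : ZMod (2 * p)) ^ k) = 1 := by
  simp [modTwo_natCast_of_odd hg]

theorem eq_of_modTwo_eq_of_modP_eq [NeZero p] (hp : Odd p) {x y : ZMod (2 * p)}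
    (h2 : modTwo p x = modTwo p y) (hp' : modP p x = modP p y) : x = y :=
  ZMod.eq_of_castHom_eq (Nat.coprime_two_left.2 hp) h2 hp'

theorem natCast_ne_zero_of_odd (hp : Odd p) : (p : ZMod (2 * p)) ≠ 0 := by
  intro h
  have h1 := modTwo_natCast_of_odd (p := p) hp
  rw [h, map_zero] at h1
  exact zero_ne_one h1

theorem pow_val_eq_neg_one_pow_mul {A : Type*} [CommRing A] [NeZero p] {β γ : A}
    (hβ : β ^ p = 1) (hγ : γ = -β) (x : ZMod (2 * p)) :
    γ ^ x.val = (-1) ^ (modTwo p x).val * β ^ (modP p x).val := by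
  rw [hγ, neg_pow, pow_eq_pow_val_natCast (neg_one_sq (R := A)) x.val,
    pow_eq_pow_val_natCast hβ x.val]
  simp [modTwo, modP, ZMod.natCast_val]

theorem exists_gpow_eq [Fact p.Prime] (hgp : IsPrimitiveRoot (g : ZMod p) (p - 1)) {y : ZMod p}
    (hy : y ≠ 0) : ∃ k < p - 1, (g : ZMod p) ^ k = y :=
  have : NeZero (p - 1) := ⟨Nat.sub_ne_zero_of_lt (Fact.out : p.Prime).one_lt⟩
  hgp.eq_pow_of_pow_eq_one (ZMod.pow_card_sub_one_eq_one hy)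

theorem gpow_ne_zero [Fact p.Prime] (hgp : IsPrimitiveRoot (g : ZMod p) (p - 1)) (k : ℕ) :
    (g : ZMod p) ^ k ≠ 0 :=
  pow_ne_zero _ (hgp.ne_zero (Nat.sub_ne_zero_of_lt (Fact.out : p.Prime).one_lt))

theorem mod_two_eq_of_gpow_eq [Fact p.Prime] (hp : Odd p)
    (hgp : IsPrimitiveRoot (g : ZMod p) (p - 1)) {a b : ℕ}
    (h : (g : ZMod p) ^ a = (g : ZMod p) ^ b) : a % 2 = b % 2 :=
  ((hgp.pow_eq_pow_iff_modEq (Nat.sub_ne_zero_of_lt (Fact.out : p.Prime).one_lt)).1 h).of_dvd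
    (even_iff_two_dvd.1 (Nat.Odd.sub_odd hp odd_one))

theorem even_iff_of_gpow_eq_two [Fact p.Prime] (hp : Odd p)
    (hgp : IsPrimitiveRoot (g : ZMod p) (p - 1)) {t : ℕ} (ht : (g : ZMod p) ^ t = 2) :
    Even t ↔ p % 8 = 1 ∨ p % 8 = 7 := by
  rw [← ZMod.exists_sq_eq_two_iff (by rintro rfl; exact absurd hp (by decide)), ← ht]
  refine ⟨fun hte => hte.isSquare_pow _, fun ⟨y, hy⟩ => ?_⟩
  have hy0 : y ≠ 0 := by
    rintro rfl
    exact gpow_ne_zero hgp t (by rw [hy, mul_zero])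
  obtain ⟨s, -, rfl⟩ := exists_gpow_eq hgp hy0
  rw [← pow_add] at hy
  have := mod_two_eq_of_gpow_eq hp hgp hy
  exact Nat.even_iff.2 (by omega)

variable {j : ℕ} {x : ZMod (2 * p)}

theorem mem_Dcl :
    x ∈ Dcl p g j ↔ ∃ n < (p - 1) / 2, (g : ZMod (2 * p)) ^ (2 * n + j) = x := by
  simp [Dcl]

theorem mem_Ecl :
    x ∈ Ecl p g j ↔ ∃ n < (p - 1) / 2, 2 * (g : ZMod (2 * p)) ^ (2 * n + j) = x := by
  simp [Ecl, Dcl]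

theorem gpow_mem_Dcl (hp : Odd p) {k : ℕ} (hk : k < p - 1) :
    (g : ZMod (2 * p)) ^ k ∈ Dcl p g (k % 2) := by
  obtain ⟨a, rfl⟩ := hp
  exact mem_Dcl.2 ⟨k / 2, by omega, by rw [Nat.div_add_mod]⟩

theorem two_mul_gpow_mem_Ecl (hp : Odd p) {k : ℕ} (hk : k < p - 1) :
    2 * (g : ZMod (2 * p)) ^ k ∈ Ecl p g (k % 2) :=
  mem_image_of_mem _ (gpow_mem_Dcl hp hk)

theorem modTwo_of_mem_Dcl (hg : Odd g) (hx : x ∈ Dcl p g j) : modTwo p x = 1 := by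
  obtain ⟨n, -, rfl⟩ := mem_Dcl.1 hx
  exact modTwo_gpow hg _

theorem modTwo_of_mem_Ecl (hx : x ∈ Ecl p g j) : modTwo p x = 0 := by
  obtain ⟨n, -, rfl⟩ := mem_Ecl.1 hx
  simp

theorem modP_of_mem_Dcl (hx : x ∈ Dcl p g j) : ∃ n, modP p x = (g : ZMod p) ^ (2 * n + j) := by
  obtain ⟨n, -, rfl⟩ := mem_Dcl.1 hx
  exact ⟨n, by simp⟩

theorem modP_of_mem_Ecl (hx : x ∈ Ecl p g j) :
    ∃ n, modP p x = 2 * (g : ZMod p) ^ (2 * n + j) := by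
  obtain ⟨n, -, rfl⟩ := mem_Ecl.1 hx
  exact ⟨n, by simp⟩

theorem zero_notMem_Dcl (hg : Odd g) : (0 : ZMod (2 * p)) ∉ Dcl p g j := fun h => by
  simpa using modTwo_of_mem_Dcl hg h

theorem natCast_notMem_Dcl [Fact p.Prime] (hgp : IsPrimitiveRoot (g : ZMod p) (p - 1)) :
    (p : ZMod (2 * p)) ∉ Dcl p g j := fun h => by
  obtain ⟨n, hn⟩ := modP_of_mem_Dcl h
  rw [map_natCast, ZMod.natCast_self] at hn
  exact gpow_ne_zero hgp _ hn.symm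

theorem zero_notMem_Ecl [Fact p.Prime] (hp : Odd p)
    (hgp : IsPrimitiveRoot (g : ZMod p) (p - 1)) : (0 : ZMod (2 * p)) ∉ Ecl p g j := fun h => by
  obtain ⟨n, hn⟩ := modP_of_mem_Ecl h
  rw [map_zero] at hn
  exact mul_ne_zero (ZMod.two_ne_zero_of_odd hp) (gpow_ne_zero hgp _) hn.symm

theorem natCast_notMem_Ecl (hp : Odd p) : (p : ZMod (2 * p)) ∉ Ecl p g j := fun h => by
  simpa [modTwo_natCast_of_odd hp] using modTwo_of_mem_Ecl h

theorem disjoint_Dcl_Ecl (hg : Odd g) (i j : ℕ) : Disjoint (Dcl p g i) (Ecl p g j) :=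
  disjoint_left.2 fun _ hx hx' => by simpa [modTwo_of_mem_Dcl hg hx] using modTwo_of_mem_Ecl hx'

theorem disjoint_Dcl_zero_one [Fact p.Prime] (hp : Odd p)
    (hgp : IsPrimitiveRoot (g : ZMod p) (p - 1)) : Disjoint (Dcl p g 0) (Dcl p g 1) := by
  refine disjoint_left.2 fun x hx hx' => ?_
  obtain ⟨n, hn⟩ := modP_of_mem_Dcl hx
  obtain ⟨m, hm⟩ := modP_of_mem_Dcl hx'
  have := mod_two_eq_of_gpow_eq hp hgp (hn.symm.trans hm)
  omega

theorem disjoint_Ecl_zero_one [Fact p.Prime] (hp : Odd p)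
    (hgp : IsPrimitiveRoot (g : ZMod p) (p - 1)) : Disjoint (Ecl p g 0) (Ecl p g 1) := by
  refine disjoint_left.2 fun x hx hx' => ?_
  obtain ⟨n, hn⟩ := modP_of_mem_Ecl hx
  obtain ⟨m, hm⟩ := modP_of_mem_Ecl hx'
  have := mod_two_eq_of_gpow_eq hp hgp
    (mul_left_cancel₀ (ZMod.two_ne_zero_of_odd hp) (hn.symm.trans hm))
  omega

theorem mem_classes_of_modP_ne_zero [Fact p.Prime] (hp : Odd p) (hg : Odd g)
    (hgp : IsPrimitiveRoot (g : ZMod p) (p - 1)) (h0 : modP p x ≠ 0) :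
    x ∈ Dcl p g 0 ∨ x ∈ Dcl p g 1 ∨ x ∈ Ecl p g 0 ∨ x ∈ Ecl p g 1 := by
  have h2 := ZMod.two_ne_zero_of_odd hp
  rcases ZMod.eq_zero_or_eq_one_of_two (modTwo p x) with h | h
  · obtain ⟨k, hk, hgk⟩ := exists_gpow_eq hgp (div_ne_zero h0 h2)
    have hx : 2 * (g : ZMod (2 * p)) ^ k = x := eq_of_modTwo_eq_of_modP_eq hp (by simp [h])
      (by rw [map_mul, modP_two, map_pow, map_natCast, hgk, mul_div_cancel₀ _ h2])
    have := two_mul_gpow_mem_Ecl (g := g) hp hk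
    rcases Nat.mod_two_eq_zero_or_one k with hk2 | hk2 <;> rw [hk2, hx] at this <;> simp [this]
  · obtain ⟨k, hk, hgk⟩ := exists_gpow_eq hgp h0
    have hx : (g : ZMod (2 * p)) ^ k = x :=
      eq_of_modTwo_eq_of_modP_eq hp (by simp [h, modTwo_gpow hg]) (by simp [hgk])
    have := gpow_mem_Dcl (g := g) hp hk
    rcases Nat.mod_two_eq_zero_or_one k with hk2 | hk2 <;> rw [hk2, hx] at this <;> simp [this]

theorem eq_zero_or_eq_natCast_or_mem_classes [Fact p.Prime] (hp : Odd p) (hg : Odd g)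
    (hgp : IsPrimitiveRoot (g : ZMod p) (p - 1)) (x : ZMod (2 * p)) :
    x = 0 ∨ x = p ∨ x ∈ Dcl p g 0 ∨ x ∈ Dcl p g 1 ∨ x ∈ Ecl p g 0 ∨ x ∈ Ecl p g 1 := by
  by_cases h0 : modP p x = 0
  · rcases ZMod.eq_zero_or_eq_one_of_two (modTwo p x) with h | h
    · exact .inl (eq_of_modTwo_eq_of_modP_eq hp (by simp [h]) (by simp [h0]))
    · exact .inr (.inl (eq_of_modTwo_eq_of_modP_eq hp (by simp [h, modTwo_natCast_of_odd hp])
        (by simp [h0])))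
  · exact .inr (.inr (mem_classes_of_modP_ne_zero hp hg hgp h0))

theorem seqS_val [Fact p.Prime] (hp : Odd p) (hg : Odd g)
    (hgp : IsPrimitiveRoot (g : ZMod p) (p - 1)) (x : ZMod (2 * p)) :
    seqS p g x.val = (if x ∈ Dcl p g 1 then 1 else 0) + (if x ∈ Ecl p g 0 then 2 else 0) +
      (if x ∈ Ecl p g 1 then 3 else 0) + (if x = p then 2 else 0) := by
  have hD := disjoint_Dcl_zero_one hp hgp
  have hE := disjoint_Ecl_zero_one hp hgp
  have hp0 := natCast_ne_zero_of_odd hp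
  rw [seqS, ZMod.natCast_zmod_val]
  rcases eq_zero_or_eq_natCast_or_mem_classes hp hg hgp x with rfl | rfl | hx | hx | hx | hx
  · simp [zero_notMem_Dcl hg, zero_notMem_Ecl hp hgp, hp0.symm]
  · simp [natCast_notMem_Dcl hgp, natCast_notMem_Ecl hp, hp0]
  · simp [hx, ne_of_mem_of_not_mem hx (natCast_notMem_Dcl hgp), disjoint_left.1 hD hx,
      disjoint_left.1 (disjoint_Dcl_Ecl hg 0 0) hx, disjoint_left.1 (disjoint_Dcl_Ecl hg 0 1) hx]
  · simp [hx, ne_of_mem_of_not_mem hx (zero_notMem_Dcl hg),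
      ne_of_mem_of_not_mem hx (natCast_notMem_Dcl hgp), disjoint_right.1 hD hx,
      disjoint_left.1 (disjoint_Dcl_Ecl hg 1 0) hx, disjoint_left.1 (disjoint_Dcl_Ecl hg 1 1) hx]
  · simp [hx, ne_of_mem_of_not_mem hx (zero_notMem_Ecl hp hgp),
      ne_of_mem_of_not_mem hx (natCast_notMem_Ecl hp), disjoint_left.1 hE hx,
      disjoint_right.1 (disjoint_Dcl_Ecl hg 0 0) hx, disjoint_right.1 (disjoint_Dcl_Ecl hg 1 0) hx]
  · simp [hx, ne_of_mem_of_not_mem hx (zero_notMem_Ecl hp hgp),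
      ne_of_mem_of_not_mem hx (natCast_notMem_Ecl hp), disjoint_right.1 hE hx,
      disjoint_right.1 (disjoint_Dcl_Ecl hg 0 1) hx, disjoint_right.1 (disjoint_Dcl_Ecl hg 1 1) hx]

theorem sum_seqS_mul {A : Type*} [CommRing A] [Algebra (ZMod 4) A] [Fact p.Prime] (hp : Odd p)
    (hg : Odd g) (hgp : IsPrimitiveRoot (g : ZMod p) (p - 1)) (F : ZMod (2 * p) → A) :
    ∑ x, algebraMap (ZMod 4) A (seqS p g x.val) * F x =
      ∑ x ∈ Dcl p g 1, F x + 2 * ∑ x ∈ Ecl p g 0, F x + 3 * ∑ x ∈ Ecl p g 1, F x +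
        2 * F p := by
  simp only [seqS_val hp hg hgp, map_add, apply_ite (algebraMap (ZMod 4) A), map_zero, map_one,
    map_ofNat, add_mul, ite_mul, zero_mul, one_mul, sum_add_distrib, sum_ite_mem, univ_inter,
    sum_ite_eq', mem_univ, if_true, mul_sum]

theorem gpow_injOn [Fact p.Prime] (hp : Odd p) (hgp : IsPrimitiveRoot (g : ZMod p) (p - 1))
    (j : ℕ) : Set.InjOn (fun n => (g : ZMod (2 * p)) ^ (2 * n + j)) (range ((p - 1) / 2)) := by
  intro a ha b hb h
  have hK : 2 * ((p - 1) / 2) = p - 1 := Nat.two_mul_div_two_of_even (Nat.Odd.sub_odd hp odd_one)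
  have h' := congrArg (modP p) h
  simp only [map_pow, map_natCast] at h'
  have hmod := (hgp.pow_eq_pow_iff_modEq (Nat.sub_ne_zero_of_lt (Fact.out : p.Prime).one_lt)).1 h'
  rw [← hK] at hmod
  exact (Nat.ModEq.mul_left_cancel' two_ne_zero (hmod.add_right_cancel' j)).eq_of_lt_of_lt
    (mem_range.1 ha) (mem_range.1 hb)

theorem two_mul_injOn [Fact p.Prime] (hp : Odd p) (hg : Odd g) :
    Set.InjOn (fun x : ZMod (2 * p) => 2 * x) (Dcl p g j) := by
  intro x hx y hy h
  refine eq_of_modTwo_eq_of_modP_eq hp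
    (by rw [modTwo_of_mem_Dcl hg hx, modTwo_of_mem_Dcl hg hy]) ?_
  have h' := congrArg (modP p) h
  simp only [map_mul, modP_two] at h'
  exact mul_left_cancel₀ (ZMod.two_ne_zero_of_odd hp) h'

theorem sum_Dcl {M : Type*} [AddCommMonoid M] [Fact p.Prime] (hp : Odd p)
    (hgp : IsPrimitiveRoot (g : ZMod p) (p - 1)) (j : ℕ) (F : ZMod (2 * p) → M) :
    ∑ x ∈ Dcl p g j, F x = ∑ n ∈ range ((p - 1) / 2), F (g ^ j * g ^ (2 * n)) := by
  simp_rw [Dcl, sum_image (gpow_injOn hp hgp j), pow_add, mul_comm]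

theorem sum_Ecl {M : Type*} [AddCommMonoid M] [Fact p.Prime] (hp : Odd p) (hg : Odd g)
    (hgp : IsPrimitiveRoot (g : ZMod p) (p - 1)) (j : ℕ) (F : ZMod (2 * p) → M) :
    ∑ x ∈ Ecl p g j, F x = ∑ n ∈ range ((p - 1) / 2), F (2 * g ^ j * g ^ (2 * n)) := by
  simp_rw [Ecl, sum_image (two_mul_injOn hp hg), sum_Dcl hp hgp, mul_assoc]

end CyclotomicClasses

section GaussPeriods

variable {A : Type*} [CommRing A] {p g : ℕ}

/-- The Gauss period `Σ_{y ∈ g^m Q} β^y`, `Q` the quadratic residues mod `p`. -/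
noncomputable def gaussPeriod (p g : ℕ) (β : A) (m : ℕ) : A :=
  ∑ n ∈ range ((p - 1) / 2), β ^ ((g : ZMod p) ^ (2 * n + m)).val

theorem map_gaussPeriod {B : Type*} [CommRing B] (φ : A →+* B) (β : A) (m : ℕ) :
    φ (gaussPeriod p g β m) = gaussPeriod p g (φ β) m := by
  simp [gaussPeriod]

theorem gaussPeriod_add_two (hp : Odd p) (hgp : IsPrimitiveRoot (g : ZMod p) (p - 1)) (β : A)
    (m : ℕ) : gaussPeriod p g β (m + 2) = gaussPeriod p g β m := by
  set K := (p - 1) / 2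
  have hK : 2 * K = p - 1 := Nat.two_mul_div_two_of_even (Nat.Odd.sub_odd hp odd_one)
  set F := fun n => β ^ ((g : ZMod p) ^ (2 * n + m)).val
  have hwrap : F K = F 0 := by
    simp only [F, hK, pow_add, hgp.pow_eq_one, mul_zero, pow_zero, one_mul]
  have h := (sum_range_succ' F K).symm.trans (sum_range_succ F K)
  rw [hwrap, add_left_inj] at h
  rw [gaussPeriod, gaussPeriod, ← h]
  exact sum_congr rfl fun n _ => by simp only [F]; ring_nf

theorem gaussPeriod_add_two_mul (hp : Odd p) (hgp : IsPrimitiveRoot (g : ZMod p) (p - 1))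
    (β : A) (m s : ℕ) : gaussPeriod p g β (m + 2 * s) = gaussPeriod p g β m := by
  induction s with
  | zero => rfl
  | succ s ih => rw [mul_add, mul_one, ← add_assoc, gaussPeriod_add_two hp hgp, ih]

theorem gaussPeriod_congr (hp : Odd p) (hgp : IsPrimitiveRoot (g : ZMod p) (p - 1)) (β : A)
    {a b : ℕ} (h : a % 2 = b % 2) : gaussPeriod p g β a = gaussPeriod p g β b := by
  rw [← Nat.mod_add_div a 2, ← Nat.mod_add_div b 2, gaussPeriod_add_two_mul hp hgp,
    gaussPeriod_add_two_mul hp hgp, h]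

theorem gaussPeriod_zero_add_one [Fact p.Prime] (hp : Odd p)
    (hgp : IsPrimitiveRoot (g : ZMod p) (p - 1)) {β : A} (hβ : ∑ i ∈ range p, β ^ i = 0) :
    gaussPeriod p g β 0 + gaussPeriod p g β 1 = -1 := by
  have hK : 2 * ((p - 1) / 2) = p - 1 := Nat.two_mul_div_two_of_even (Nat.Odd.sub_odd hp odd_one)
  have hunits : ∑ k ∈ range (p - 1), β ^ ((g : ZMod p) ^ k).val =
      ∑ y ∈ univ.erase (0 : ZMod p), β ^ y.val := by
    refine sum_nbij (fun k => (g : ZMod p) ^ k) (fun k _ => mem_erase.2 ⟨gpow_ne_zero hgp k,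
      mem_univ _⟩) (fun a ha b hb h => hgp.pow_inj (mem_range.1 ha) (mem_range.1 hb) h)
      (fun y hy => ?_) (fun _ _ => rfl)
    obtain ⟨k, hk, rfl⟩ := exists_gpow_eq hgp (mem_erase.1 hy).1
    exact ⟨k, mem_range.2 hk, rfl⟩
  calc gaussPeriod p g β 0 + gaussPeriod p g β 1
      = ∑ k ∈ range (p - 1), β ^ ((g : ZMod p) ^ k).val := by
        conv_rhs => rw [← hK, sum_range_two_mul]
        rw [gaussPeriod, gaussPeriod, ← sum_add_distrib]
        rfl
    _ = ∑ y : ZMod p, β ^ y.val - 1 := by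
        rw [hunits, sum_erase_eq_sub (mem_univ _), ZMod.val_zero, pow_zero]
    _ = -1 := by rw [ZMod.sum_comp_val, hβ, zero_sub]

theorem gaussPeriod_add_gaussPeriod_succ [Fact p.Prime] (hp : Odd p)
    (hgp : IsPrimitiveRoot (g : ZMod p) (p - 1)) {β : A} (hβ : ∑ i ∈ range p, β ^ i = 0)
    (m : ℕ) : gaussPeriod p g β m + gaussPeriod p g β (m + 1) = -1 := by
  rcases Nat.mod_two_eq_zero_or_one m with h | h
  · rw [gaussPeriod_congr hp hgp β (a := m) (b := 0) (by omega),
      gaussPeriod_congr hp hgp β (a := m + 1) (b := 1) (by omega)]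
    exact gaussPeriod_zero_add_one hp hgp hβ
  · rw [gaussPeriod_congr hp hgp β (a := m) (b := 1) (by omega),
      gaussPeriod_congr hp hgp β (a := m + 1) (b := 0) (by omega), add_comm]
    exact gaussPeriod_zero_add_one hp hgp hβ

theorem gaussPeriod_sq {K : Type*} [CommRing K] [CharP K 2] [NeZero p] {β : K}
    (hβ : β ^ p = 1) {t : ℕ} (ht : (g : ZMod p) ^ t = 2) (m : ℕ) :
    gaussPeriod p g β m ^ 2 = gaussPeriod p g β (m + t) := by
  rw [gaussPeriod, sum_pow_char]
  refine sum_congr rfl fun n _ => ?_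
  rw [← pow_mul, mul_comm, pow_eq_pow_val_natCast hβ]
  push_cast
  rw [ZMod.natCast_zmod_val, ← ht, ← pow_add]
  ring_nf

end GaussPeriods

section Evaluation

variable {A : Type*} [CommRing A] {p g : ℕ}

/-- `Σ_{x ∈ u D_0} γ^x`. -/
noncomputable def cosetSum (p g : ℕ) (γ : A) (u : ZMod (2 * p)) : A :=
  ∑ n ∈ range ((p - 1) / 2), γ ^ (u * (g : ZMod (2 * p)) ^ (2 * n)).val

theorem cosetSum_eq [NeZero p] (hg : Odd g) {β γ : A} (hβ : β ^ p = 1) (hγ : γ = -β)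
    (u : ZMod (2 * p)) (m : ℕ) (hu : modP p u = (g : ZMod p) ^ m) :
    cosetSum p g γ u = (-1) ^ (modTwo p u).val * gaussPeriod p g β m := by
  simp only [cosetSum, gaussPeriod, pow_val_eq_neg_one_pow_mul hβ hγ, map_mul, modTwo_gpow hg,
    mul_one, map_pow, map_natCast, hu, ← pow_add, mul_sum, add_comm m]

theorem cosetSum_of_modP_eq_zero [NeZero p] (hg : Odd g) {β γ : A} (hβ : β ^ p = 1)
    (hγ : γ = -β) (u : ZMod (2 * p)) (hu : modP p u = 0) :
    cosetSum p g γ u = (-1) ^ (modTwo p u).val * ((p - 1) / 2 : ℕ) := by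
  simp [cosetSum, pow_val_eq_neg_one_pow_mul hβ hγ, modTwo_gpow hg, hu, mul_comm]

theorem pow_two_mul_eq_one_of_eq_neg {β γ : A} (hβ : β ^ p = 1) (hγ : γ = -β) :
    γ ^ (2 * p) = 1 := by
  rw [hγ, pow_mul, neg_sq, ← pow_mul, mul_comm, pow_mul, hβ, one_pow]

theorem aeval_pow_val_genPoly [Algebra (ZMod 4) A] [Fact p.Prime] (hp : Odd p) (hg : Odd g)
    (hgp : IsPrimitiveRoot (g : ZMod p) (p - 1)) {γ : A} (hγ : γ ^ (2 * p) = 1)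
    (v : ZMod (2 * p)) :
    aeval (γ ^ v.val) (genPoly p g) = cosetSum p g γ (v * g) + 2 * cosetSum p g γ (2 * v) +
      3 * cosetSum p g γ (2 * v * g) + 2 * γ ^ (v * p).val := by
  have hval : ∀ x : ZMod (2 * p), (γ ^ v.val) ^ x.val = γ ^ (v * x).val := fun x => by
    rw [← pow_mul, ZMod.val_mul, ← pow_eq_pow_mod _ hγ]
  have hsum : aeval (γ ^ v.val) (genPoly p g) =
      ∑ x : ZMod (2 * p), algebraMap (ZMod 4) A (seqS p g x.val) * γ ^ (v * x).val := by
    simp only [← hval, genPoly, map_sum, map_mul, aeval_C, map_pow, aeval_X]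
    exact (ZMod.sum_comp_val _ fun i => algebraMap (ZMod 4) A (seqS p g i) * (γ ^ v.val) ^ i).symm
  rw [hsum, sum_seqS_mul hp hg hgp, sum_Dcl hp hgp, sum_Ecl hp hg hgp, sum_Ecl hp hg hgp]
  simp only [cosetSum, pow_one, pow_zero, mul_one]
  ring_nf

end Evaluation

section Values

variable {A : Type*} [CommRing A] [Algebra (ZMod 4) A] {p g : ℕ} [Fact p.Prime] {β γ : A}

theorem aeval_gpow (hp : Odd p) (hg : Odd g) (hgp : IsPrimitiveRoot (g : ZMod p) (p - 1))
    (hβ : β ^ p = 1) (hγ : γ = -β) {t : ℕ} (ht : (g : ZMod p) ^ t = 2) (k : ℕ) :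
    aeval (γ ^ ((g : ZMod (2 * p)) ^ k).val) (genPoly p g) = -gaussPeriod p g β (k + 1) +
      2 * gaussPeriod p g β (t + k) + 3 * gaussPeriod p g β (t + k + 1) - 2 := by
  rw [aeval_pow_val_genPoly hp hg hgp (pow_two_mul_eq_one_of_eq_neg hβ hγ),
    cosetSum_eq hg hβ hγ _ (k + 1) (by simp [pow_succ]),
    cosetSum_eq hg hβ hγ _ (t + k) (by simp [← ht, pow_add]),
    cosetSum_eq hg hβ hγ _ (t + k + 1) (by simp [← ht, pow_add, pow_succ]),
    pow_val_eq_neg_one_pow_mul hβ hγ]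
  simp only [map_mul, map_pow, modTwo_natCast_of_odd hg, modTwo_natCast_of_odd hp, modTwo_two,
    one_pow, mul_one, ZMod.val_one, ZMod.val_zero, pow_one, pow_zero, map_natCast,
    ZMod.natCast_self, mul_zero]
  ring

theorem aeval_two_mul_gpow (hp : Odd p) (hg : Odd g) (hgp : IsPrimitiveRoot (g : ZMod p) (p - 1))
    (hβ : β ^ p = 1) (hγ : γ = -β) {t : ℕ} (ht : (g : ZMod p) ^ t = 2) (k : ℕ) :
    aeval (γ ^ (2 * (g : ZMod (2 * p)) ^ k).val) (genPoly p g) = gaussPeriod p g β (t + k + 1) +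
      2 * gaussPeriod p g β (t + t + k) + 3 * gaussPeriod p g β (t + t + k + 1) + 2 := by
  rw [aeval_pow_val_genPoly hp hg hgp (pow_two_mul_eq_one_of_eq_neg hβ hγ),
    cosetSum_eq hg hβ hγ _ (t + k + 1) (by simp [← ht, pow_add, pow_succ]),
    cosetSum_eq hg hβ hγ _ (t + t + k) (by simp [← ht, pow_add, mul_assoc]),
    cosetSum_eq hg hβ hγ _ (t + t + k + 1) (by simp [← ht, pow_add, pow_succ, mul_assoc]),
    pow_val_eq_neg_one_pow_mul hβ hγ]
  simp only [map_mul, map_pow, modTwo_natCast_of_odd hg, modTwo_two, one_pow, mul_one, zero_mul,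
    ZMod.val_zero, pow_zero, map_natCast, ZMod.natCast_self, mul_zero]
  ring

theorem isUnit_aeval_of_mem_Dcl (hp : Odd p) (hg : Odd g)
    (hgp : IsPrimitiveRoot (g : ZMod p) (p - 1)) (hβ : β ^ p = 1) (hγ : γ = -β)
    (hsum : ∑ i ∈ range p, β ^ i = 0) {t : ℕ} (ht : (g : ZMod p) ^ t = 2) (hto : Odd t)
    {j : ℕ} {v : ZMod (2 * p)} (hv : v ∈ Dcl p g j) :
    IsUnit (aeval (γ ^ v.val) (genPoly p g)) := by
  obtain ⟨n, -, rfl⟩ := mem_Dcl.1 hv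
  obtain ⟨s, rfl⟩ := hto
  set k := 2 * n + j
  have h := gaussPeriod_add_gaussPeriod_succ hp hgp hsum k
  rw [aeval_gpow hp hg hgp hβ hγ ht,
    gaussPeriod_congr hp hgp β (a := 2 * s + 1 + k) (b := k + 1) (by omega),
    gaussPeriod_congr hp hgp β (a := 2 * s + 1 + k + 1) (b := k) (by omega)]
  convert isUnit_add_two_mul isUnit_one.neg (gaussPeriod p g β k - 1) using 1
  linear_combination h

theorem isUnit_aeval_of_mem_Ecl (hp : Odd p) (hg : Odd g)
    (hgp : IsPrimitiveRoot (g : ZMod p) (p - 1)) (hβ : β ^ p = 1) (hγ : γ = -β)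
    (hsum : ∑ i ∈ range p, β ^ i = 0) {t : ℕ} (ht : (g : ZMod p) ^ t = 2) (hto : Odd t)
    {j : ℕ} {v : ZMod (2 * p)} (hv : v ∈ Ecl p g j) :
    IsUnit (aeval (γ ^ v.val) (genPoly p g)) := by
  obtain ⟨n, -, rfl⟩ := mem_Ecl.1 hv
  obtain ⟨s, rfl⟩ := hto
  set k := 2 * n + j
  have h := gaussPeriod_add_gaussPeriod_succ hp hgp hsum k
  rw [aeval_two_mul_gpow hp hg hgp hβ hγ ht,
    gaussPeriod_congr hp hgp β (a := 2 * s + 1 + k + 1) (b := k) (by omega),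
    gaussPeriod_congr hp hgp β (a := 2 * s + 1 + (2 * s + 1) + k) (b := k) (by omega),
    gaussPeriod_congr hp hgp β (a := 2 * s + 1 + (2 * s + 1) + k + 1) (b := k + 1) (by omega)]
  convert (isUnit_one (M := A)).neg using 1
  linear_combination 3 * h

theorem aeval_of_mem_Dcl_of_even (hp : Odd p) (hg : Odd g)
    (hgp : IsPrimitiveRoot (g : ZMod p) (p - 1)) (hβ : β ^ p = 1) (hγ : γ = -β)
    (hsum : ∑ i ∈ range p, β ^ i = 0) {t : ℕ} (ht : (g : ZMod p) ^ t = 2) (hte : Even t)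
    {j : ℕ} {v : ZMod (2 * p)} (hv : v ∈ Dcl p g j) : aeval (γ ^ v.val) (genPoly p g) = 0 := by
  obtain ⟨n, -, rfl⟩ := mem_Dcl.1 hv
  obtain ⟨s, rfl⟩ := hte
  set k := 2 * n + j
  have h := gaussPeriod_add_gaussPeriod_succ hp hgp hsum k
  rw [aeval_gpow hp hg hgp hβ hγ ht,
    gaussPeriod_congr hp hgp β (a := s + s + k) (b := k) (by omega),
    gaussPeriod_congr hp hgp β (a := s + s + k + 1) (b := k + 1) (by omega)]
  linear_combination 2 * h - four_eq_zero (A := A)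

theorem aeval_of_mem_Ecl_of_even (hp : Odd p) (hg : Odd g)
    (hgp : IsPrimitiveRoot (g : ZMod p) (p - 1)) (hβ : β ^ p = 1) (hγ : γ = -β)
    {t : ℕ} (ht : (g : ZMod p) ^ t = 2) (hte : Even t) {j : ℕ} {v : ZMod (2 * p)}
    (hv : v ∈ Ecl p g j) : aeval (γ ^ v.val) (genPoly p g) = 2 * gaussPeriod p g β j + 2 := by
  obtain ⟨n, -, rfl⟩ := mem_Ecl.1 hv
  obtain ⟨s, rfl⟩ := hte
  rw [aeval_two_mul_gpow hp hg hgp hβ hγ ht,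
    gaussPeriod_congr hp hgp β (a := s + s + (2 * n + j) + 1) (b := j + 1) (by omega),
    gaussPeriod_congr hp hgp β (a := s + s + (s + s) + (2 * n + j)) (b := j) (by omega),
    gaussPeriod_congr hp hgp β (a := s + s + (s + s) + (2 * n + j) + 1) (b := j + 1) (by omega)]
  linear_combination gaussPeriod p g β (j + 1) * four_eq_zero (A := A)

theorem isUnit_aeval_of_mem_classes (hp : Odd p) (hg : Odd g)
    (hgp : IsPrimitiveRoot (g : ZMod p) (p - 1)) (hβ : β ^ p = 1) (hγ : γ = -β)
    (hsum : ∑ i ∈ range p, β ^ i = 0) {t : ℕ} (ht : (g : ZMod p) ^ t = 2) (hto : Odd t)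
    {v : ZMod (2 * p)} (hv : v ∈ Dcl p g 0 ∪ Dcl p g 1 ∪ Ecl p g 0 ∪ Ecl p g 1) :
    IsUnit (aeval (γ ^ v.val) (genPoly p g)) := by
  simp only [mem_union] at hv
  rcases hv with ((hv | hv) | hv) | hv
  · exact isUnit_aeval_of_mem_Dcl hp hg hgp hβ hγ hsum ht hto hv
  · exact isUnit_aeval_of_mem_Dcl hp hg hgp hβ hγ hsum ht hto hv
  · exact isUnit_aeval_of_mem_Ecl hp hg hgp hβ hγ hsum ht hto hv
  · exact isUnit_aeval_of_mem_Ecl hp hg hgp hβ hγ hsum ht hto hv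

theorem aeval_eq_zero_of_mem_classes (hp : Odd p) (hg : Odd g)
    (hgp : IsPrimitiveRoot (g : ZMod p) (p - 1)) (hβ : β ^ p = 1) (hγ : γ = -β)
    (hsum : ∑ i ∈ range p, β ^ i = 0) {t : ℕ} (ht : (g : ZMod p) ^ t = 2) (hte : Even t)
    (h2 : 2 * gaussPeriod p g β 0 = 2) {v : ZMod (2 * p)}
    (hv : v ∈ Dcl p g 0 ∪ Dcl p g 1 ∪ Ecl p g 0) : aeval (γ ^ v.val) (genPoly p g) = 0 := by
  simp only [mem_union] at hv
  rcases hv with (hv | hv) | hv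
  · exact aeval_of_mem_Dcl_of_even hp hg hgp hβ hγ hsum ht hte hv
  · exact aeval_of_mem_Dcl_of_even hp hg hgp hβ hγ hsum ht hte hv
  · rw [aeval_of_mem_Ecl_of_even hp hg hgp hβ hγ ht hte hv]
    linear_combination h2 + four_eq_zero (A := A)

theorem aeval_eq_two_of_mem_Ecl_one (hp : Odd p) (hg : Odd g)
    (hgp : IsPrimitiveRoot (g : ZMod p) (p - 1)) (hβ : β ^ p = 1) (hγ : γ = -β)
    (hsum : ∑ i ∈ range p, β ^ i = 0) {t : ℕ} (ht : (g : ZMod p) ^ t = 2) (hte : Even t)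
    (h2 : 2 * gaussPeriod p g β 0 = 2) {v : ZMod (2 * p)} (hv : v ∈ Ecl p g 1) :
    aeval (γ ^ v.val) (genPoly p g) = 2 := by
  rw [aeval_of_mem_Ecl_of_even hp hg hgp hβ hγ ht hte hv]
  linear_combination 2 * gaussPeriod_zero_add_one hp hgp hsum - h2 - four_eq_zero (A := A)

theorem aeval_one_genPoly (hp : Odd p) (hg : Odd g) (hgp : IsPrimitiveRoot (g : ZMod p) (p - 1))
    (hβ : β ^ p = 1) (hγ : γ = -β) : aeval (γ ^ (0 : ℕ)) (genPoly p g) = p + 1 := by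
  rw [← ZMod.val_zero (n := 2 * p),
    aeval_pow_val_genPoly hp hg hgp (pow_two_mul_eq_one_of_eq_neg hβ hγ),
    cosetSum_of_modP_eq_zero hg hβ hγ _ (by simp), cosetSum_of_modP_eq_zero hg hβ hγ _ (by simp),
    cosetSum_of_modP_eq_zero hg hβ hγ _ (by simp)]
  have hK : 2 * ((p - 1) / 2) + 1 = p := by
    obtain ⟨a, rfl⟩ := hp
    omega
  have hKA := congrArg (Nat.cast : ℕ → A) hK
  push_cast at hKA
  simp only [zero_mul, map_zero, ZMod.val_zero, pow_zero, one_mul, mul_zero, mul_one]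
  linear_combination ((p - 1) / 2 : ℕ) * four_eq_zero (A := A) + hKA

theorem aeval_pow_self_genPoly (hp : Odd p) (hg : Odd g)
    (hgp : IsPrimitiveRoot (g : ZMod p) (p - 1)) (hβ : β ^ p = 1) (hγ : γ = -β) :
    aeval (γ ^ p) (genPoly p g) = 2 := by
  have hpv : (p : ZMod (2 * p)).val = p := by
    rw [ZMod.val_natCast, Nat.mod_eq_of_lt (by have := (Fact.out : p.Prime).pos; omega)]
  rw [show γ ^ p = γ ^ (p : ZMod (2 * p)).val by rw [hpv],
    aeval_pow_val_genPoly hp hg hgp (pow_two_mul_eq_one_of_eq_neg hβ hγ),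
    cosetSum_of_modP_eq_zero hg hβ hγ _ (by simp), cosetSum_of_modP_eq_zero hg hβ hγ _ (by simp),
    cosetSum_of_modP_eq_zero hg hβ hγ _ (by simp), pow_val_eq_neg_one_pow_mul hβ hγ]
  simp only [map_mul, modTwo_natCast_of_odd hp, modTwo_natCast_of_odd hg, mul_one, ZMod.val_one,
    pow_one, neg_mul, one_mul, modTwo_two, ZMod.val_zero, pow_zero, map_natCast,
    CharP.cast_eq_zero, mul_zero, mul_neg]
  linear_combination ((p - 1) / 2 : ℕ) * four_eq_zero (A := A) - four_eq_zero (A := A)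

theorem S0val_eq (hp : Odd p) (hg : Odd g) (hgp : IsPrimitiveRoot (g : ZMod p) (p - 1))
    {f : (ZMod 4)[X]} {β γ : (GaloisR f)ˣ} (hβ : (β : GaloisR f) ^ p = 1)
    (hγ : (γ : GaloisR f) = -β) : S0val p g f γ = -gaussPeriod p g (β : GaloisR f) 0 := by
  rw [S0val, sum_Dcl hp hgp 0]
  change cosetSum p g (γ : GaloisR f) ((g : ZMod (2 * p)) ^ 0) = _
  rw [cosetSum_eq hg hβ hγ _ 0 (by simp), modTwo_gpow hg, ZMod.val_one, pow_one]
  ring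

theorem two_mul_gaussPeriod_zero {f : (ZMod 4)[X]} (hf : Irreducible (f.map ZMod.fourToTwo))
    (hp : Odd p) (hgp : IsPrimitiveRoot (g : ZMod p) (p - 1)) {β : GaloisR f} (hβ : β ^ p = 1)
    {t : ℕ} (ht : (g : ZMod p) ^ t = 2) (hte : Even t) (hu : IsUnit (gaussPeriod p g β 0)) :
    2 * gaussPeriod p g β 0 = 2 := by
  have := GaloisR.charP_residueField hf
  refine GaloisR.two_mul_eq_two_of_residue_sq hu ?_
  rw [map_gaussPeriod, gaussPeriod_sq (by rw [← map_pow, hβ, map_one]) ht,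
    gaussPeriod_congr hp hgp _ (a := 0 + t) (b := 0)
      (by rw [zero_add]; exact Nat.even_iff.1 hte)]

end Values

theorem stmt15 (p g : ℕ) (hp : p.Prime) (hpodd : Odd p)
    (hgodd : Odd g)
    (hg1 : orderOf (g : ZMod p) = p - 1)
    (f : Polynomial (ZMod 4))
    (hfirr : Irreducible (f.map (ZMod.castHom (by norm_num : (2:ℕ) ∣ 4) (ZMod 2))))
    (β : (GaloisR f)ˣ) (hβ : orderOf β = p)
    (γ : (GaloisR f)ˣ) (hγ : γ = -β)
    (hunit : IsUnit (S0val p g f γ)) :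
    (Polynomial.aeval ((γ : GaloisR f) ^ (0 : ℕ)) (genPoly p g) = (p : GaloisR f) + 1 ∧
     Polynomial.aeval ((γ : GaloisR f) ^ p) (genPoly p g) = 2) ∧
    ((p % 8 = 3 ∨ p % 8 = 5) →
      ∀ v ∈ Dcl p g 0 ∪ Dcl p g 1 ∪ Ecl p g 0 ∪ Ecl p g 1,
        IsUnit (Polynomial.aeval ((γ : GaloisR f) ^ v.val) (genPoly p g))) ∧
    ((p % 8 = 1 ∨ p % 8 = 7) →
      (∀ v ∈ Dcl p g 0 ∪ Dcl p g 1 ∪ Ecl p g 0,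
        Polynomial.aeval ((γ : GaloisR f) ^ v.val) (genPoly p g) = 0) ∧
      (∀ v ∈ Ecl p g 1,
        Polynomial.aeval ((γ : GaloisR f) ^ v.val) (genPoly p g) = 2)) := by
  have := Fact.mk hp
  have hgp : IsPrimitiveRoot (g : ZMod p) (p - 1) := hg1 ▸ IsPrimitiveRoot.orderOf _
  have hβp : (β : GaloisR f) ^ p = 1 := by
    rw [← Units.val_pow_eq_pow_val, ← hβ, pow_orderOf_eq_one, Units.val_one]
  have hβ2 : (β : GaloisR f) ^ 2 ≠ 1 := fun h => pow_ne_one_of_lt_orderOf (x := β) two_ne_zero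
    (by obtain ⟨a, rfl⟩ := hpodd; have := hp.two_le; omega) (Units.ext (by simpa using h))
  have hγβ : (γ : GaloisR f) = -β := by rw [hγ, Units.val_neg]
  have hsum := GaloisR.geom_sum_eq_zero hfirr hβp hβ2
  obtain ⟨t, -, ht⟩ := exists_gpow_eq hgp (ZMod.two_ne_zero_of_odd hpodd)
  have h8 := even_iff_of_gpow_eq_two hpodd hgp ht
  refine ⟨⟨aeval_one_genPoly hpodd hgodd hgp hβp hγβ,
    aeval_pow_self_genPoly hpodd hgodd hgp hβp hγβ⟩, fun h35 _ hv => ?_, fun h17 => ?_⟩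
  · have hto : Odd t := Nat.not_even_iff_odd.1 fun hte => by have := h8.1 hte; omega
    exact isUnit_aeval_of_mem_classes hpodd hgodd hgp hβp hγβ hsum ht hto hv
  · have hte := h8.2 h17
    have h2 := two_mul_gaussPeriod_zero hfirr hpodd hgp hβp ht hte
      (by simpa [S0val_eq hpodd hgodd hgp hβp hγβ] using hunit.neg)
    exact ⟨fun _ hv => aeval_eq_zero_of_mem_classes hpodd hgodd hgp hβp hγβ hsum ht hte h2 hv,
      fun _ hv => aeval_eq_two_of_mem_Ecl_one hpodd hgodd hgp hβp hγβ hsum ht hte h2 hv⟩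
end
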